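/- arXiv:2603.26936 — 9 statements merged into one kernel-verified Lean document; each statement's English description precedes it below -/
import Mathlib

section
/- Let (M, dist) be a metric space and let a ∈ (0,1). Then for all points x, y, z ∈ M one has F_{a;x,y}(z) ≥ (dist(x,z) − a·dist(x,y))². -/
theorem sq_dist_sub_dist_le_sq_dist {α : Type*} [PseudoMetricSpace α] (x y z : α) :
    (dist x z - dist x y) ^ 2 ≤ dist z y ^ 2 := by
  rw [sq_le_sq, abs_dist]
  simpa only [dist_comm x] using abs_dist_sub_le z y x

/-- Three distances function lower bound (Lemma 3.1 of the paper):
in any metric space, for `a ∈ (0,1)`,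
`F_{a;x,y}(z) ≥ (dist x z − a·dist x y)²`. -/
theorem three_distances_lower_bound {M : Type*} [MetricSpace M]
    (a : ℝ) (ha : a ∈ Set.Ioo (0:ℝ) 1) (x y z : M) :
    (1 - a) * dist x z ^ 2 + a * dist z y ^ 2 - a * (1 - a) * dist x y ^ 2
      ≥ (dist x z - a * dist x y) ^ 2 := by
  -- The difference of the two sides is `a * (dist z y ^ 2 - (dist x z - dist x y) ^ 2)`.
  linear_combination mul_le_mul_of_nonneg_left (sq_dist_sub_dist_le_sq_dist x y z) ha.1.le
end

section
/- Let (M, dist) be a metric space, a ∈ [0,1], and x, y, z, p ∈ M. Suppose dist(x,p) = a·dist(x,y) and dist(p,y) = (1−a)·dist(x,y) (i.e. p is an intermediate point at parameter a between x and y), and suppose dist(p,z) ≥ dist(x,y). Then F_{a;x,y}(z) ≥ dist(p,z)² − 4a(1−a)·dist(x,y)·dist(p,z). -/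
/-!
By the triangle inequality through `p`, `dist x z ≥ dist p z - a·dist x y` and
`dist z y ≥ dist p z - (1 - a)·dist x y`, and both bounds are nonnegative because `p` is far
from `z`. Substituting them into `F_{a;x,y}(z)`, the terms in `dist x y ²` cancel exactly and
what remains is `dist p z ² - 4a(1 - a)·dist x y·dist p z`.
-/

theorem sq_dist_sub_le_sq_dist {M : Type*} [PseudoMetricSpace M] {x z p : M} {r : ℝ}
    (hxp : dist x p ≤ r) (hr : r ≤ dist p z) : (dist p z - r) ^ 2 ≤ dist x z ^ 2 := by
  have hreverse : dist p z - r ≤ dist x z := by linarith [dist_triangle_left p z x]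
  exact pow_le_pow_left₀ (sub_nonneg.2 hr) hreverse 2

theorem weighted_sq_sub_mul_eq (a L D : ℝ) :
    (1 - a) * (D - a * L) ^ 2 + a * (D - (1 - a) * L) ^ 2 - a * (1 - a) * L ^ 2
      = D ^ 2 - 4 * a * (1 - a) * L * D := by
  ring

/-- Far-point estimate (Step 2 of Lemma 3.5): if `p` is an intermediate point at
parameter `a` between `x` and `y`, and `dist p z ≥ dist x y`, then
`F_{a;x,y}(z) ≥ dist p z² − 4a(1−a)·dist x y·dist p z`. -/
theorem three_distances_far_point {M : Type*} [MetricSpace M]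
    (a : ℝ) (ha : a ∈ Set.Icc (0:ℝ) 1) (x y z p : M)
    (hxp : dist x p = a * dist x y) (hpy : dist p y = (1 - a) * dist x y)
    (hpz : dist p z ≥ dist x y) :
    (1 - a) * dist x z ^ 2 + a * dist z y ^ 2 - a * (1 - a) * dist x y ^ 2
      ≥ dist p z ^ 2 - 4 * a * (1 - a) * dist x y * dist p z := by
  obtain ⟨ha0, ha1⟩ := ha
  have hb0 : 0 ≤ 1 - a := sub_nonneg.2 ha1
  have hxz : (dist p z - a * dist x y) ^ 2 ≤ dist x z ^ 2 :=
    sq_dist_sub_le_sq_dist hxp.le ((mul_le_of_le_one_left dist_nonneg ha1).trans hpz)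
  have hzy : (dist p z - (1 - a) * dist x y) ^ 2 ≤ dist z y ^ 2 := by
    rw [dist_comm z y]
    refine sq_dist_sub_le_sq_dist (by rw [dist_comm, hpy]) ?_
    exact (mul_le_of_le_one_left dist_nonneg (by linarith)).trans hpz
  calc dist p z ^ 2 - 4 * a * (1 - a) * dist x y * dist p z
      = (1 - a) * (dist p z - a * dist x y) ^ 2 + a * (dist p z - (1 - a) * dist x y) ^ 2
          - a * (1 - a) * dist x y ^ 2 := (weighted_sq_sub_mul_eq a _ _).symm
    _ ≤ (1 - a) * dist x z ^ 2 + a * dist z y ^ 2 - a * (1 - a) * dist x y ^ 2 := by gcongr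
end

section
/- Let (M, dist) be a metric space, a ∈ [0,1], ζ ∈ (0,1), and x, y, z, p ∈ M. Suppose dist(x,p) = a·dist(x,y) and dist(p,y) = (1−a)·dist(x,y), and suppose dist(p,z) ≥ dist(x,y)/(1−ζ). Then F_{a;x,y}(z) ≥ ζ·dist(p,z)². -/
/-!
Put `d = dist x y` and `r = dist p z`. The triangle inequality through `p` gives
`dist x z ≥ r - a d` and `dist z y ≥ r - (1 - a) d`, and both right-hand sides are nonnegative as
soon as `d ≤ r`. Substituting them into `F = threeDistances a x y z` leaves exactly
`r² - 4a(1 - a) d r ≥ r² - d r`, which is at least `ζ r²` because `d ≤ (1 - ζ) r`.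
-/

open Set

noncomputable def threeDistances {M : Type*} [PseudoMetricSpace M] (a : ℝ) (x y z : M) : ℝ :=
  (1 - a) * dist x z ^ 2 + a * dist z y ^ 2 - a * (1 - a) * dist x y ^ 2

theorem sq_sub_mul_le_threeDistances {M : Type*} [PseudoMetricSpace M] {a : ℝ}
    (ha : a ∈ Icc (0 : ℝ) 1) {x y z p : M}
    (hxp : dist x p = a * dist x y) (hpy : dist p y = (1 - a) * dist x y)
    (hfar : dist x y ≤ dist p z) :
    dist p z ^ 2 - 4 * a * (1 - a) * dist x y * dist p z ≤ threeDistances a x y z := by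
  obtain ⟨ha0, ha1⟩ := ha
  have hxz : dist p z - a * dist x y ≤ dist x z := by
    linarith [dist_triangle p x z, dist_comm p x]
  have hzy : dist p z - (1 - a) * dist x y ≤ dist z y := by
    linarith [dist_triangle p y z, dist_comm y z]
  have hd : 0 ≤ dist x y := dist_nonneg
  have hxz₀ : 0 ≤ dist p z - a * dist x y := by nlinarith
  have hzy₀ : 0 ≤ dist p z - (1 - a) * dist x y := by nlinarith
  calc dist p z ^ 2 - 4 * a * (1 - a) * dist x y * dist p z
      = (1 - a) * (dist p z - a * dist x y) ^ 2 + a * (dist p z - (1 - a) * dist x y) ^ 2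
          - a * (1 - a) * dist x y ^ 2 := by ring
    _ ≤ threeDistances a x y z := by
      unfold threeDistances
      gcongr

/-- Conclusion of Step 2 of Lemma 3.5: far from the intermediate point `p`,
the three distances function dominates `ζ` times the squared distance to `p`. -/
theorem three_distances_far_point_zeta {M : Type*} [MetricSpace M]
    (a : ℝ) (ha : a ∈ Set.Icc (0:ℝ) 1) (ζ : ℝ) (hζ : ζ ∈ Set.Ioo (0:ℝ) 1)
    (x y z p : M)
    (hxp : dist x p = a * dist x y) (hpy : dist p y = (1 - a) * dist x y)
    (hpz : dist p z ≥ dist x y / (1 - ζ)) :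
    (1 - a) * dist x z ^ 2 + a * dist z y ^ 2 - a * (1 - a) * dist x y ^ 2
      ≥ ζ * dist p z ^ 2 := by
  obtain ⟨hζ0, hζ1⟩ := hζ
  have hfar : dist x y ≤ (1 - ζ) * dist p z := by
    rwa [ge_iff_le, div_le_iff₀ (sub_pos.2 hζ1), mul_comm] at hpz
  have hr : 0 ≤ dist p z := dist_nonneg
  have hd : 0 ≤ dist x y := dist_nonneg
  have hquarter : 4 * a * (1 - a) ≤ 1 := by
    simpa using four_mul_le_sq_add a (1 - a)
  calc ζ * dist p z ^ 2 ≤ dist p z ^ 2 - dist x y * dist p z := by nlinarith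
    _ ≤ dist p z ^ 2 - 4 * a * (1 - a) * dist x y * dist p z := by
      have := mul_le_mul_of_nonneg_right hquarter (mul_nonneg hd hr)
      linarith
    _ ≤ threeDistances a x y z :=
      sq_sub_mul_le_threeDistances ha hxp hpy (by nlinarith)
end

section
/- Let d be a positive integer, let (M, dist) be a metric space equipped with a Borel measure m such that m(M) < ∞ and m(B(x,r)) ≤ C_v·r^d for all x ∈ M and r > 0, let c > 0 and 0 < α < d/2. Then there exists a constant C > 0 such that for all t > 0 and all x, x' ∈ M, ∫_M t^(−d/2)·exp(−dist(x,y)²/(c·t))·dist(x',y)^(2α−d) dm(y) ≤ C·(t^((2α−d)/2) + 1). -/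
/-!
Split the integral at the ball `B(x', √t)`. Inside it the Gaussian factor is at most `t^{-d/2}`,
and summing the volume bound over the dyadic shells `2^{-k-1}√t < dist(x', y) ≤ 2^{-k}√t` gives
`∫_{B(x', √t)} dist(x', y)^{2α-d} ≲ t^α`, a convergent geometric series because
`d + (2α - d) = 2α > 0`. Outside it the Riesz factor is at most `t^{(2α-d)/2}`, while the
Gaussian has mass bounded uniformly in `t` and `x`: on the shell `k√t ≤ dist(x, y) < (k+1)√t`
it is at most `t^{-d/2} e^{-k²/c}`, the shell has volume at most `C_v (k+1)^d t^{d/2}`, and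
`∑ (k+1)^d e^{-k²/c} < ∞`. Both pieces are therefore `O(t^{(2α-d)/2})`.
-/

open MeasureTheory Metric
open scoped ENNReal

theorem summable_succ_pow_mul_exp_neg_sq_div (d : ℕ) {c : ℝ} (hc : 0 < c) :
    Summable fun k : ℕ => ((k : ℝ) + 1) ^ d * Real.exp (-(k : ℝ) ^ 2 / c) := by
  have hshift : Summable fun k : ℕ => ((k : ℝ) + 1) ^ d * Real.exp (-c⁻¹ * ((k : ℝ) + 1)) := by
    simpa using (summable_nat_add_iff 1).mpr
      (Real.summable_pow_mul_exp_neg_nat_mul d (inv_pos.mpr hc))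
  refine (hshift.mul_left (Real.exp c⁻¹)).of_nonneg_of_le (fun k => by positivity) fun k => ?_
  rw [mul_left_comm, ← Real.exp_add]
  gcongr
  have : (k : ℝ) ≤ (k : ℝ) ^ 2 := by
    rcases Nat.eq_zero_or_pos k with h | h
    · simp [h]
    · exact le_self_pow₀ (by exact_mod_cast h) two_ne_zero
  rw [div_eq_mul_inv]
  nlinarith [inv_pos.mpr hc]

section

variable {M : Type*} [MetricSpace M]

noncomputable def gaussianKernel (d : ℕ) (c t : ℝ) (x y : M) : ℝ :=
  t ^ (-((d : ℝ) / 2)) * Real.exp (-(dist x y ^ 2) / (c * t))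

variable {d : ℕ} {c t : ℝ}

theorem gaussianKernel_nonneg (ht : 0 ≤ t) (x y : M) : 0 ≤ gaussianKernel d c t x y := by
  unfold gaussianKernel; positivity

theorem gaussianKernel_le (hc : 0 ≤ c) (ht : 0 ≤ t) (x y : M) :
    gaussianKernel d c t x y ≤ t ^ (-((d : ℝ) / 2)) := by
  refine mul_le_of_le_one_right (by positivity) (Real.exp_le_one_iff.mpr ?_)
  exact div_nonpos_of_nonpos_of_nonneg (neg_nonpos.mpr (sq_nonneg _)) (by positivity)

theorem gaussianKernel_le_of_mul_sqrt_le_dist (hc : 0 < c) (ht : 0 < t) {k : ℝ} (hk : 0 ≤ k)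
    {x y : M} (h : k * √t ≤ dist x y) :
    gaussianKernel d c t x y ≤ t ^ (-((d : ℝ) / 2)) * Real.exp (-k ^ 2 / c) := by
  refine mul_le_mul_of_nonneg_left (Real.exp_le_exp.mpr ?_) (by positivity)
  have hsq : k ^ 2 * t ≤ dist x y ^ 2 := by
    simpa [mul_pow, Real.sq_sqrt ht.le] using pow_le_pow_left₀ (by positivity) h 2
  rw [div_le_div_iff₀ (by positivity) hc, neg_mul, neg_mul, neg_le_neg_iff]
  nlinarith

theorem ball_diff_singleton_subset_iUnion_closedBall_diff {r : ℝ} (hr₀ : 0 < r) (hr₁ : r < 1)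
    (x : M) {s : ℝ} (hs : 0 < s) :
    ball x s \ {x} ⊆ ⋃ k : ℕ, closedBall x (r ^ k * s) \ closedBall x (r ^ (k + 1) * s) := by
  rintro y ⟨hys, hyx⟩
  obtain ⟨k, hlow, hhigh⟩ := exists_nat_pow_near_of_lt_one (div_pos (dist_pos.mpr (Ne.symm hyx)) hs)
    ((div_le_one hs).mpr (mem_ball'.mp hys).le) hr₀ hr₁
  exact Set.mem_iUnion.mpr ⟨k, mem_closedBall'.mpr ((div_le_iff₀ hs).mp hhigh),
    fun h => (mem_closedBall'.mp h).not_gt ((lt_div_iff₀ hs).mp hlow)⟩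

variable [MeasurableSpace M] {m : Measure M} {C_v : ℝ}

theorem setLIntegral_le_tsum_of_cover_by_shells
    (hvol : ∀ (x : M) (r : ℝ), 0 < r → m (ball x r) ≤ ENNReal.ofReal (C_v * r ^ d))
    {f : M → ℝ≥0∞} {s : Set M} {x : M} {A : ℕ → Set M} {R : ℕ → ℝ} {a : ℕ → ℝ≥0∞}
    (hA : ∀ k, MeasurableSet (A k)) (hs : s ⊆ ⋃ k, A k) (hR : ∀ k, 0 < R k)
    (hAR : ∀ k, A k ⊆ ball x (R k)) (hf : ∀ k, ∀ y ∈ A k, f y ≤ a k) :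
    ∫⁻ y in s, f y ∂m ≤ ∑' k, a k * ENNReal.ofReal (C_v * R k ^ d) :=
  calc ∫⁻ y in s, f y ∂m
      ≤ ∫⁻ y in ⋃ k, A k, f y ∂m := lintegral_mono_set hs
    _ ≤ ∑' k, ∫⁻ y in A k, f y ∂m := lintegral_iUnion_le _ _
    _ ≤ ∑' k, a k * m (A k) := ENNReal.tsum_le_tsum fun k =>
        (setLIntegral_mono' (hA k) (hf k)).trans_eq (setLIntegral_const _ _)
    _ ≤ ∑' k, a k * ENNReal.ofReal (C_v * R k ^ d) := ENNReal.tsum_le_tsum fun k => by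
        gcongr
        exact (measure_mono (hAR k)).trans (hvol x _ (hR k))

theorem lintegral_gaussianKernel_le [OpensMeasurableSpace M] (hCv : 0 ≤ C_v)
    (hvol : ∀ (x : M) (r : ℝ), 0 < r → m (ball x r) ≤ ENNReal.ofReal (C_v * r ^ d))
    (hc : 0 < c) (ht : 0 < t) (x : M) :
    ∫⁻ y, ENNReal.ofReal (gaussianKernel d c t x y) ∂m ≤
      ENNReal.ofReal (C_v * ∑' k : ℕ, ((k : ℝ) + 1) ^ d * Real.exp (-(k : ℝ) ^ 2 / c)) := by
  have hs : 0 < √t := Real.sqrt_pos.mpr ht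
  have hcover : Set.univ ⊆ ⋃ k : ℕ, ball x ((k + 1) * √t) \ ball x (k * √t) := by
    intro y _
    refine Set.mem_iUnion.mpr ⟨⌊dist x y / √t⌋₊, mem_ball'.mpr ?_, fun hy => ?_⟩
    · exact (div_lt_iff₀ hs).mp (Nat.lt_floor_add_one _)
    · exact (mem_ball'.mp hy).not_ge ((le_div_iff₀ hs).mp (Nat.floor_le (by positivity)))
  have hscale (k : ℕ) : t ^ (-((d : ℝ) / 2)) * Real.exp (-(k : ℝ) ^ 2 / c) *
      (C_v * ((k + 1) * √t) ^ d) = C_v * (((k : ℝ) + 1) ^ d * Real.exp (-(k : ℝ) ^ 2 / c)) := by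
    have : t ^ (-((d : ℝ) / 2)) * √t ^ d = 1 := by
      rw [Real.rpow_neg ht.le, ← Real.rpow_natCast, ← Real.rpow_div_two_eq_sqrt _ ht.le,
        inv_mul_cancel₀ (by positivity)]
    rw [mul_pow]
    linear_combination (C_v * ((k : ℝ) + 1) ^ d * Real.exp (-(k : ℝ) ^ 2 / c)) * this
  calc ∫⁻ y, ENNReal.ofReal (gaussianKernel d c t x y) ∂m
      = ∫⁻ y in Set.univ, ENNReal.ofReal (gaussianKernel d c t x y) ∂m :=
        (setLIntegral_univ _).symm
    _ ≤ ∑' k : ℕ, ENNReal.ofReal (t ^ (-((d : ℝ) / 2)) * Real.exp (-(k : ℝ) ^ 2 / c)) *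
          ENNReal.ofReal (C_v * ((k + 1) * √t) ^ d) :=
        setLIntegral_le_tsum_of_cover_by_shells hvol
          (fun _ => measurableSet_ball.diff measurableSet_ball) hcover (fun _ => by positivity)
          (fun _ => Set.sdiff_subset) fun k y hy => ENNReal.ofReal_le_ofReal <|
            gaussianKernel_le_of_mul_sqrt_le_dist hc ht k.cast_nonneg
              (not_lt.mp (hy.2 ∘ mem_ball'.mpr))
    _ = ∑' k : ℕ, ENNReal.ofReal (C_v * (((k : ℝ) + 1) ^ d * Real.exp (-(k : ℝ) ^ 2 / c))) := by
        refine tsum_congr fun k => ?_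
        rw [← ENNReal.ofReal_mul (by positivity), hscale]
    _ = ENNReal.ofReal (C_v * ∑' k : ℕ, ((k : ℝ) + 1) ^ d * Real.exp (-(k : ℝ) ^ 2 / c)) := by
        rw [← tsum_mul_left, ENNReal.ofReal_tsum_of_nonneg (fun _ => by positivity)
          ((summable_succ_pow_mul_exp_neg_sq_div d hc).mul_left C_v)]

theorem exists_setLIntegral_ball_dist_rpow_le [OpensMeasurableSpace M] (hCv : 0 ≤ C_v)
    (hvol : ∀ (x : M) (r : ℝ), 0 < r → m (ball x r) ≤ ENNReal.ofReal (C_v * r ^ d))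
    {β : ℝ} (hβ : β < 0) (hdβ : 0 < d + β) :
    ∃ K ≥ 0, ∀ (x : M) (s : ℝ), 0 < s →
      ∫⁻ y in ball x s, ENNReal.ofReal (dist x y ^ β) ∂m ≤
        ENNReal.ofReal (K * s ^ ((d : ℝ) + β)) := by
  set r : ℝ := 2⁻¹
  have hr : 0 < r := by norm_num
  set q : ℝ := r ^ ((d : ℝ) + β)
  have hq : q < 1 := Real.rpow_lt_one hr.le (by norm_num) hdβ
  refine ⟨C_v * 2 ^ d * r ^ β * (1 - q)⁻¹,
    by have := sub_pos.mpr hq; positivity, fun x s hs => ?_⟩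
  have hterm (k : ℕ) : (r ^ (k + 1) * s) ^ β * (C_v * (2 * (r ^ k * s)) ^ d) =
      C_v * 2 ^ d * r ^ β * s ^ ((d : ℝ) + β) * q ^ k := by
    have hρ : 0 < r ^ k * s := by positivity
    have hsplit : (r ^ k * s) ^ β * (r ^ k * s) ^ d = s ^ ((d : ℝ) + β) * q ^ k := by
      rw [← Real.rpow_natCast (r ^ k * s) d, ← Real.rpow_add hρ, add_comm β,
        Real.mul_rpow (by positivity) hs.le, ← Real.rpow_pow_comm hr.le, mul_comm]
    rw [pow_succ', mul_assoc, Real.mul_rpow hr.le hρ.le, mul_pow]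
    linear_combination C_v * 2 ^ d * r ^ β * hsplit
  calc ∫⁻ y in ball x s, ENNReal.ofReal (dist x y ^ β) ∂m
      ≤ ∫⁻ y in ball x s \ {x}, ENNReal.ofReal (dist x y ^ β) ∂m +
          ∫⁻ y in {x}, ENNReal.ofReal (dist x y ^ β) ∂m :=
        (lintegral_mono_set (Set.subset_sdiff_union _ _)).trans (lintegral_union_le _ _ _)
    _ = ∫⁻ y in ball x s \ {x}, ENNReal.ofReal (dist x y ^ β) ∂m := by
        -- the centre contributes nothing since `0 ^ β = 0` for `β ≠ 0`
        rw [lintegral_singleton, dist_self, Real.zero_rpow hβ.ne, ENNReal.ofReal_zero, zero_mul,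
          add_zero]
    _ ≤ ∑' k : ℕ, ENNReal.ofReal ((r ^ (k + 1) * s) ^ β) *
          ENNReal.ofReal (C_v * (2 * (r ^ k * s)) ^ d) :=
        setLIntegral_le_tsum_of_cover_by_shells hvol
          (fun _ => measurableSet_closedBall.diff measurableSet_closedBall)
          (ball_diff_singleton_subset_iUnion_closedBall_diff hr (by norm_num) x hs)
          (fun _ => by positivity)
          (fun k => Set.sdiff_subset.trans (closedBall_subset_ball (by
            have : 0 < r ^ k * s := by positivity
            linarith)))
          fun k y hy => ENNReal.ofReal_le_ofReal <| Real.rpow_le_rpow_of_nonpos (by positivity)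
            (not_le.mp (hy.2 ∘ mem_closedBall'.mpr)).le hβ.le
    _ = ∑' k : ℕ, ENNReal.ofReal (C_v * 2 ^ d * r ^ β * s ^ ((d : ℝ) + β) * q ^ k) :=
        tsum_congr fun k => by rw [← ENNReal.ofReal_mul (by positivity), hterm]
    _ = ENNReal.ofReal (C_v * 2 ^ d * r ^ β * (1 - q)⁻¹ * s ^ ((d : ℝ) + β)) := by
        rw [← ENNReal.ofReal_tsum_of_nonneg (fun _ => by positivity)
          ((summable_geometric_of_lt_one (by positivity) hq).mul_left _), tsum_mul_left,
          tsum_geometric_of_lt_one (by positivity) hq]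
        ring_nf

theorem setLIntegral_ball_gaussianKernel_mul_rpow_le (hc : 0 ≤ c) (ht : 0 < t) (x x' : M)
    {β K : ℝ}
    (hK : ∫⁻ y in ball x' √t, ENNReal.ofReal (dist x' y ^ β) ∂m ≤
      ENNReal.ofReal (K * √t ^ ((d : ℝ) + β))) :
    ∫⁻ y in ball x' √t, ENNReal.ofReal (gaussianKernel d c t x y * dist x' y ^ β) ∂m ≤
      ENNReal.ofReal (K * t ^ (β / 2)) :=
  calc ∫⁻ y in ball x' √t, ENNReal.ofReal (gaussianKernel d c t x y * dist x' y ^ β) ∂m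
      ≤ ∫⁻ y in ball x' √t, ENNReal.ofReal (t ^ (-((d : ℝ) / 2))) *
          ENNReal.ofReal (dist x' y ^ β) ∂m := lintegral_mono fun y => by
        rw [← ENNReal.ofReal_mul (by positivity)]
        gcongr
        exact gaussianKernel_le hc ht.le x y
    _ = ENNReal.ofReal (t ^ (-((d : ℝ) / 2))) *
          ∫⁻ y in ball x' √t, ENNReal.ofReal (dist x' y ^ β) ∂m :=
        lintegral_const_mul' _ _ ENNReal.ofReal_ne_top
    _ ≤ ENNReal.ofReal (t ^ (-((d : ℝ) / 2))) * ENNReal.ofReal (K * √t ^ ((d : ℝ) + β)) := by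
        gcongr
    _ = ENNReal.ofReal (K * t ^ (β / 2)) := by
        rw [← ENNReal.ofReal_mul (by positivity), ← Real.rpow_div_two_eq_sqrt _ ht.le,
          mul_left_comm, ← Real.rpow_add ht]
        ring_nf

theorem setLIntegral_compl_ball_gaussianKernel_mul_rpow_le [OpensMeasurableSpace M] (ht : 0 < t)
    (x x' : M) {β : ℝ} (hβ : β ≤ 0) :
    ∫⁻ y in (ball x' √t)ᶜ, ENNReal.ofReal (gaussianKernel d c t x y * dist x' y ^ β) ∂m ≤
      ENNReal.ofReal (t ^ (β / 2)) * ∫⁻ y, ENNReal.ofReal (gaussianKernel d c t x y) ∂m :=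
  calc ∫⁻ y in (ball x' √t)ᶜ, ENNReal.ofReal (gaussianKernel d c t x y * dist x' y ^ β) ∂m
      ≤ ∫⁻ y in (ball x' √t)ᶜ, ENNReal.ofReal (t ^ (β / 2)) *
          ENNReal.ofReal (gaussianKernel d c t x y) ∂m :=
        setLIntegral_mono' measurableSet_ball.compl fun y hy => by
          rw [← ENNReal.ofReal_mul (by positivity), mul_comm (t ^ (β / 2)),
            Real.rpow_div_two_eq_sqrt _ ht.le]
          refine ENNReal.ofReal_le_ofReal
            (mul_le_mul_of_nonneg_left ?_ (gaussianKernel_nonneg ht.le x y))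
          exact Real.rpow_le_rpow_of_nonpos (Real.sqrt_pos.mpr ht)
            (not_lt.mp (hy ∘ mem_ball'.mpr)) hβ
    _ ≤ ∫⁻ y, ENNReal.ofReal (t ^ (β / 2)) * ENNReal.ofReal (gaussianKernel d c t x y) ∂m :=
        setLIntegral_le_lintegral _ _
    _ = ENNReal.ofReal (t ^ (β / 2)) * ∫⁻ y, ENNReal.ofReal (gaussianKernel d c t x y) ∂m :=
        lintegral_const_mul' _ _ ENNReal.ofReal_ne_top

end

theorem gaussian_riesz_kernel_integral_general
    (d : ℕ) {M : Type*} [MetricSpace M] [MeasurableSpace M] [BorelSpace M]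
    (m : Measure M)
    (C_v : ℝ) (hCv : 0 < C_v)
    (hvol : ∀ (x : M) (r : ℝ), 0 < r → m (Metric.ball x r) ≤ ENNReal.ofReal (C_v * r ^ d))
    (c : ℝ) (hc : 0 < c) (α : ℝ) (hα : 0 < α) (hαd : α < (d:ℝ) / 2) :
    ∃ C > 0, ∀ t > 0, ∀ x x' : M,
      ∫⁻ y, ENNReal.ofReal (t ^ (-((d:ℝ) / 2)) * Real.exp (-(dist x y ^ 2) / (c * t)) *
          dist x' y ^ (2 * α - (d:ℝ))) ∂m
        ≤ ENNReal.ofReal (C * (t ^ ((2 * α - (d:ℝ)) / 2) + 1)) := by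
  obtain ⟨K, hK, hriesz⟩ := exists_setLIntegral_ball_dist_rpow_le hCv.le hvol
    (β := 2 * α - d) (by linarith) (by linarith)
  set K' := C_v * ∑' k : ℕ, ((k : ℝ) + 1) ^ d * Real.exp (-(k : ℝ) ^ 2 / c)
  have hK' : 0 ≤ K' := mul_nonneg hCv.le (tsum_nonneg fun k => by positivity)
  refine ⟨K + K' + 1, by positivity, fun t ht x x' => ?_⟩
  have hτ : 0 ≤ t ^ ((2 * α - d) / 2) := by positivity
  calc ∫⁻ y, ENNReal.ofReal (gaussianKernel d c t x y * dist x' y ^ (2 * α - d)) ∂m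
      = ∫⁻ y in ball x' √t, ENNReal.ofReal (gaussianKernel d c t x y * dist x' y ^ (2 * α - d)) ∂m
        + ∫⁻ y in (ball x' √t)ᶜ,
            ENNReal.ofReal (gaussianKernel d c t x y * dist x' y ^ (2 * α - d)) ∂m :=
        (lintegral_add_compl _ measurableSet_ball).symm
    _ ≤ ENNReal.ofReal (K * t ^ ((2 * α - d) / 2)) +
          ENNReal.ofReal (t ^ ((2 * α - d) / 2)) * ENNReal.ofReal K' := by
        gcongr
        · exact setLIntegral_ball_gaussianKernel_mul_rpow_le hc.le ht x x'
            (hriesz x' _ (Real.sqrt_pos.mpr ht))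
        · exact (setLIntegral_compl_ball_gaussianKernel_mul_rpow_le ht x x' (by linarith)).trans
            (by gcongr; exact lintegral_gaussianKernel_le hCv.le hvol hc ht x)
    _ ≤ ENNReal.ofReal ((K + K' + 1) * (t ^ ((2 * α - d) / 2) + 1)) := by
        rw [← ENNReal.ofReal_mul hτ, ← ENNReal.ofReal_add (by positivity) (by positivity)]
        exact ENNReal.ofReal_le_ofReal (by nlinarith)

/-- Estimate (3.9) of the paper, metric-measure form: Gaussian kernel centered at
`x` integrated against the Riesz-type kernel centered at a possibly different
point `x'`. -/
theorem gaussian_riesz_kernel_integral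
    (d : ℕ) (hd : 1 ≤ d) {M : Type*} [MetricSpace M] [MeasurableSpace M] [BorelSpace M]
    (m : Measure M) (hfin : m Set.univ < ⊤)
    (C_v : ℝ) (hCv : 0 < C_v)
    (hvol : ∀ (x : M) (r : ℝ), 0 < r → m (Metric.ball x r) ≤ ENNReal.ofReal (C_v * r ^ d))
    (c : ℝ) (hc : 0 < c) (α : ℝ) (hα : 0 < α) (hαd : α < (d:ℝ) / 2) :
    ∃ C > 0, ∀ t > 0, ∀ x x' : M,
      ∫⁻ y, ENNReal.ofReal (t ^ (-((d:ℝ) / 2)) * Real.exp (-(dist x y ^ 2) / (c * t)) *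
          dist x' y ^ (2 * α - (d:ℝ))) ∂m
        ≤ ENNReal.ofReal (C * (t ^ ((2 * α - (d:ℝ)) / 2) + 1)) :=
  gaussian_riesz_kernel_integral_general d m C_v hCv hvol c hc α hα hαd
end

section
/- Let (M, dist) be a nonempty metric space equipped with a Borel measure m, and let f, g : [0,∞) → [0,∞) be nonincreasing functions. Then for all x, x' ∈ M, ∫_M f(dist(x,y))·g(dist(x',y)) dm(y) ≤ 2·sup_{z∈M} ∫_M f(dist(z,y))·g(dist(z,y)) dm(y), where both sides are interpreted as Lebesgue integrals with values in [0,∞] and the supremum is taken in [0,∞]. -/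
open MeasureTheory

theorem lintegral_le_add_of_le_of_le_compl {α : Type*} [MeasurableSpace α] {μ : Measure α}
    {s : Set α} (hs : MeasurableSet s) {F G H : α → ENNReal}
    (hG : ∀ y ∈ s, F y ≤ G y) (hH : ∀ y ∈ sᶜ, F y ≤ H y) :
    ∫⁻ y, F y ∂μ ≤ ∫⁻ y, G y ∂μ + ∫⁻ y, H y ∂μ := by
  rw [← lintegral_add_compl F hs]
  exact add_le_add
    ((setLIntegral_mono' hs hG).trans (setLIntegral_le_lintegral s G))
    ((setLIntegral_mono' hs.compl hH).trans (setLIntegral_le_lintegral sᶜ H))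

-- Each `y` is closer to one of the two centers; there the two-center kernel is at most the
-- single-center kernel of that center.
theorem two_center_reduction_general {M : Type*} [MetricSpace M]
    [MeasurableSpace M] [BorelSpace M] (m : Measure M)
    (f g : ℝ → ℝ) (hf_nonneg : ∀ s, 0 ≤ f s) (hg_nonneg : ∀ s, 0 ≤ g s)
    (hf : AntitoneOn f (Set.Ici 0)) (hg : AntitoneOn g (Set.Ici 0)) :
    ∀ x x' : M,
      ∫⁻ y, ENNReal.ofReal (f (dist x y) * g (dist x' y)) ∂m
        ≤ 2 * ⨆ z : M, ∫⁻ y, ENNReal.ofReal (f (dist z y) * g (dist z y)) ∂m := by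
  intro x x'
  set K : M → ENNReal := fun z ↦ ∫⁻ y, ENNReal.ofReal (f (dist z y) * g (dist z y)) ∂m
  have closer_to_x : MeasurableSet {y | dist x y ≤ dist x' y} :=
    measurableSet_le (continuous_const.dist continuous_id).measurable
      (continuous_const.dist continuous_id).measurable
  calc ∫⁻ y, ENNReal.ofReal (f (dist x y) * g (dist x' y)) ∂m
      ≤ K x + K x' := by
        refine lintegral_le_add_of_le_of_le_compl closer_to_x (fun y hy ↦ ?_) (fun y hy ↦ ?_)
        · exact ENNReal.ofReal_le_ofReal <|
            mul_le_mul_of_nonneg_left (hg dist_nonneg dist_nonneg hy) (hf_nonneg _)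
        · have hy : dist x' y ≤ dist x y := (not_le.mp (show ¬dist x y ≤ dist x' y from hy)).le
          exact ENNReal.ofReal_le_ofReal <|
            mul_le_mul_of_nonneg_right (hf dist_nonneg dist_nonneg hy) (hg_nonneg _)
    _ ≤ (⨆ z, K z) + ⨆ z, K z := add_le_add (le_iSup K x) (le_iSup K x')
    _ = 2 * ⨆ z, K z := (two_mul _).symm

/-- The two-center reduction inside Lemma 3.6 of the paper: a product of
nonincreasing radial kernels with two different centers is dominated by twice
the supremum over single-center products. -/
theorem two_center_reduction {M : Type*} [MetricSpace M] [Nonempty M]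
    [MeasurableSpace M] [BorelSpace M] (m : Measure M)
    (f g : ℝ → ℝ) (hf_nonneg : ∀ s, 0 ≤ f s) (hg_nonneg : ∀ s, 0 ≤ g s)
    (hf : AntitoneOn f (Set.Ici 0)) (hg : AntitoneOn g (Set.Ici 0)) :
    ∀ x x' : M,
      ∫⁻ y, ENNReal.ofReal (f (dist x y) * g (dist x' y)) ∂m
        ≤ 2 * ⨆ z : M, ∫⁻ y, ENNReal.ofReal (f (dist z y) * g (dist z y)) ∂m :=
  two_center_reduction_general m f g hf_nonneg hg_nonneg hf hg
end

section
/- Let d be a positive integer and let c > 0 and D > 0. Then there exists a constant C > 0 (depending only on d, c, D) such that for all t ∈ (0,1], all a ∈ (0,1/2), and all β ∈ [0,D], t^((d−1)/2)·(a(1−a)t)^(−d/2)·∫_0^D exp(−(r − aβ)²/(c·a(1−a)·t))·r^(d−1) dr ≤ C. -/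
open Real MeasureTheory

lemma rpow_half_nat {x : ℝ} (hx : 0 ≤ x) (n : ℕ) : x ^ ((n:ℝ)/2) = (Real.sqrt x)^n := by
  rw [show ((n:ℝ)/2) = (1/2 : ℝ) * (n:ℝ) by ring, Real.rpow_mul hx, Real.rpow_natCast,
    ← Real.sqrt_eq_rpow]

lemma pow_mul_exp_neg_sq_le (n : ℕ) {u : ℝ} (hu : 0 ≤ u) :
    u ^ n * Real.exp (-(u^2)) ≤ 1 + n.factorial := by
  have h1 : (u^2)^n / n.factorial ≤ Real.exp (u^2) :=
    Real.pow_div_factorial_le_exp (x := u^2) (sq_nonneg u) n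
  have h2 : (u^2)^n * Real.exp (-(u^2)) ≤ n.factorial := by
    rw [Real.exp_neg]
    rw [div_le_iff₀ (by positivity)] at h1
    rw [mul_inv_le_iff₀ (Real.exp_pos _)]
    linarith [h1]
  rcases le_total u 1 with h | h
  · have : u ^ n ≤ 1 := pow_le_one₀ hu h
    have he : Real.exp (-(u^2)) ≤ 1 := Real.exp_le_one_iff.mpr (by nlinarith)
    nlinarith [Real.exp_pos (-(u^2)), pow_nonneg hu n]
  · have : u ^ n ≤ (u^2)^n := by
      apply pow_le_pow_left₀ hu
      nlinarith
    calc u ^ n * Real.exp (-(u^2)) ≤ (u^2)^n * Real.exp (-(u^2)) :=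
          mul_le_mul_of_nonneg_right this (Real.exp_nonneg _)
      _ ≤ n.factorial := h2
      _ ≤ 1 + n.factorial := by linarith

lemma abs_pow_mul_exp_le (n : ℕ) {σ : ℝ} (hσ : 0 < σ) (x : ℝ) :
    |x| ^ n * Real.exp (-(x^2) / (2*σ)) ≤ (1 + n.factorial) * (Real.sqrt (2*σ))^n := by
  set S := Real.sqrt (2*σ) with hS
  have hS0 : 0 < S := Real.sqrt_pos.mpr (by linarith)
  set u := |x| / S with hu
  have hu0 : 0 ≤ u := by positivity
  have hu2 : u^2 = x^2 / (2*σ) := by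
    rw [hu, div_pow, sq_abs, hS, Real.sq_sqrt (by linarith : (0:ℝ) ≤ 2*σ)]
  have hx : |x| = u * S := by rw [hu, div_mul_cancel₀ _ hS0.ne']
  calc |x| ^ n * Real.exp (-(x^2) / (2*σ))
      = S ^ n * (u ^ n * Real.exp (-(u^2))) := by
        rw [hx, mul_pow, hu2, neg_div]; ring
    _ ≤ S ^ n * (1 + n.factorial) := by
        exact mul_le_mul_of_nonneg_left (pow_mul_exp_neg_sq_le n hu0) (by positivity)
    _ = (1 + n.factorial) * S ^ n := by ring

lemma add_pow_le'' {p q : ℝ} (hp : 0 ≤ p) (hq : 0 ≤ q) (n : ℕ) :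
    (p + q)^n ≤ 2^n * (p^n + q^n) := by
  rcases le_total p q with h | h
  · calc (p+q)^n ≤ (2*q)^n := pow_le_pow_left₀ (by linarith) (by linarith) n
      _ = 2^n * q^n := mul_pow 2 q n
      _ ≤ 2^n * (p^n + q^n) := by
          have := pow_nonneg hp n; have : (0:ℝ) ≤ p^n := this
          nlinarith [pow_pos (by norm_num : (0:ℝ) < 2) n]
  · calc (p+q)^n ≤ (2*p)^n := pow_le_pow_left₀ (by linarith) (by linarith) n
      _ = 2^n * p^n := mul_pow 2 p n
      _ ≤ 2^n * (p^n + q^n) := by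
          have : (0:ℝ) ≤ q^n := pow_nonneg hq n
          nlinarith [pow_pos (by norm_num : (0:ℝ) < 2) n]

/-- The radial Gaussian integral bound inside Lemma 3.6 of the paper
(bound on `t^((d−1)/2)·(I_< + I_>)` in the proof of estimate (3.10)). -/
theorem radial_gaussian_integral_bound
    (d : ℕ) (hd : 1 ≤ d) (c D : ℝ) (hc : 0 < c) (hD : 0 < D) :
    ∃ C > 0, ∀ t ∈ Set.Ioc (0:ℝ) 1, ∀ a ∈ Set.Ioo (0:ℝ) (1/2), ∀ β ∈ Set.Icc (0:ℝ) D,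
      t ^ (((d:ℝ) - 1) / 2) * (a * (1 - a) * t) ^ (-((d:ℝ) / 2)) *
          ∫ r in (0:ℝ)..D,
            Real.exp (-((r - a * β) ^ 2) / (c * a * (1 - a) * t)) * r ^ (d - 1)
        ≤ C := by
  obtain ⟨n, rfl⟩ : ∃ n, d = n + 1 := ⟨d - 1, (Nat.succ_pred_eq_of_pos hd).symm⟩
  refine ⟨2^n * Real.sqrt (2*Real.pi*c) * ((1 + (n.factorial : ℝ)) * (Real.sqrt (2*c))^n + D^n),
    by positivity, ?_⟩
  rintro t ⟨ht0, ht1⟩ a ⟨ha0, ha2⟩ β ⟨hβ0, hβD⟩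
  simp only [Nat.add_sub_cancel]
  have h1a : (0:ℝ) < 1 - a := by linarith
  set s := a * (1 - a) * t with hsdef
  have hs : 0 < s := by positivity
  have hcs : 0 < c * s := by positivity
  set b := (2 * (c * s))⁻¹ with hbdef
  have hb : 0 < b := by positivity
  set K := 2^n * ((1 + (n.factorial : ℝ)) * (Real.sqrt (2*(c*s)))^n + (a*D)^n) with hKdef
  have hK0 : 0 ≤ K := by positivity
  -- pointwise bound
  have hpt : ∀ r ∈ Set.Icc (0:ℝ) D,
      Real.exp (-((r - a * β) ^ 2) / (c * a * (1 - a) * t)) * r ^ n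
        ≤ K * Real.exp (-b * (r - a*β)^2) := by
    intro r hr
    obtain ⟨hr0, hrD⟩ := hr
    set x := r - a * β with hxdef
    have harg : -((x) ^ 2) / (c * a * (1 - a) * t) = -b*x^2 + -b*x^2 := by
      rw [hbdef, hsdef]; field_simp; ring
    rw [harg, Real.exp_add]
    have hinner : Real.exp (-b*x^2) * r ^ n ≤ K := by
      have hxb : r ≤ |x| + a*β := by
        have := le_abs_self x; rw [hxdef] at this ⊢; linarith
      have h1 : r ^ n ≤ 2^n * (|x|^n + (a*β)^n) :=
        (pow_le_pow_left₀ hr0 hxb n).trans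
          (add_pow_le'' (abs_nonneg x) (by positivity) n)
      have heq : -b*x^2 = -(x^2) / (2*(c*s)) := by
        rw [hbdef]; field_simp
      calc Real.exp (-b*x^2) * r ^ n
          ≤ Real.exp (-b*x^2) * (2^n * (|x|^n + (a*β)^n)) :=
            mul_le_mul_of_nonneg_left h1 (Real.exp_nonneg _)
        _ = 2^n * (|x|^n * Real.exp (-b*x^2) + (a*β)^n * Real.exp (-b*x^2)) := by ring
        _ ≤ 2^n * ((1 + (n.factorial:ℝ)) * (Real.sqrt (2*(c*s)))^n + (a*D)^n) := by
            apply mul_le_mul_of_nonneg_left _ (by positivity)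
            apply add_le_add
            · rw [heq]; exact abs_pow_mul_exp_le n hcs x
            · have he1 : Real.exp (-b*x^2) ≤ 1 := Real.exp_le_one_iff.mpr (by nlinarith)
              calc (a*β)^n * Real.exp (-b*x^2) ≤ (a*β)^n * 1 :=
                    mul_le_mul_of_nonneg_left he1 (by positivity)
                _ ≤ (a*D)^n := by
                    rw [mul_one]
                    exact pow_le_pow_left₀ (by positivity) (by nlinarith) n
        _ = K := hKdef.symm
    calc Real.exp (-b*x^2) * Real.exp (-b*x^2) * r ^ n
        = Real.exp (-b*x^2) * (Real.exp (-b*x^2) * r ^ n) := by ring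
      _ ≤ Real.exp (-b*x^2) * K := mul_le_mul_of_nonneg_left hinner (Real.exp_nonneg _)
      _ = K * Real.exp (-b*x^2) := by ring
  -- integral bound
  have hcont1 : Continuous fun r : ℝ =>
      Real.exp (-((r - a * β) ^ 2) / (c * a * (1 - a) * t)) * r ^ n := by
    apply Continuous.mul _ (continuous_pow n)
    exact Real.continuous_exp.comp
      ((((continuous_id.sub continuous_const).pow 2).neg).div_const _)
  have hcont2 : Continuous fun r : ℝ => K * Real.exp (-b * (r - a*β)^2) := by
    apply Continuous.mul continuous_const
    exact Real.continuous_exp.comp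
      (continuous_const.mul ((continuous_id.sub continuous_const).pow 2))
  have hmono := intervalIntegral.integral_mono_on (μ := MeasureTheory.volume) hD.le
    (hcont1.intervalIntegrable 0 D) (hcont2.intervalIntegrable 0 D) hpt
  have hIg : (∫ r in (0:ℝ)..D, Real.exp (-b * (r - a*β)^2)) ≤ Real.sqrt (Real.pi / b) := by
    rw [intervalIntegral.integral_of_le hD.le]
    have hInt : MeasureTheory.Integrable (fun r : ℝ => Real.exp (-b * (r - a*β)^2)) :=
      (integrable_exp_neg_mul_sq hb).comp_sub_right (a*β)
    calc (∫ r in Set.Ioc (0:ℝ) D, Real.exp (-b * (r - a*β)^2))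
        ≤ ∫ r : ℝ, Real.exp (-b * (r - a*β)^2) :=
          MeasureTheory.setIntegral_le_integral hInt
            (Filter.Eventually.of_forall fun r => Real.exp_nonneg _)
      _ = ∫ r : ℝ, Real.exp (-b * r^2) :=
          MeasureTheory.integral_sub_right_eq_self (μ := MeasureTheory.volume) (fun r => Real.exp (-b * r^2)) (a*β)
      _ = Real.sqrt (Real.pi / b) := integral_gaussian b
  have hsqrt : Real.sqrt (Real.pi / b) = Real.sqrt (2*Real.pi*c) * Real.sqrt s := by
    rw [show Real.pi / b = (2*Real.pi*c) * s by rw [hbdef]; field_simp,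
      Real.sqrt_mul (by positivity)]
  have hI : (∫ r in (0:ℝ)..D,
        Real.exp (-((r - a * β) ^ 2) / (c * a * (1 - a) * t)) * r ^ n)
      ≤ K * (Real.sqrt (2*Real.pi*c) * Real.sqrt s) := by
    calc _ ≤ ∫ r in (0:ℝ)..D, K * Real.exp (-b * (r - a*β)^2) := hmono
      _ = K * ∫ r in (0:ℝ)..D, Real.exp (-b * (r - a*β)^2) :=
          intervalIntegral.integral_const_mul K _
      _ ≤ K * Real.sqrt (Real.pi / b) := mul_le_mul_of_nonneg_left hIg hK0
      _ = K * (Real.sqrt (2*Real.pi*c) * Real.sqrt s) := by rw [hsqrt]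
  -- prefactor rewrites
  have e1 : t ^ ((((n+1:ℕ):ℝ) - 1)/2) = (Real.sqrt t)^n := by
    rw [show ((((n+1:ℕ):ℝ)) - 1)/2 = ((n:ℕ):ℝ)/2 by push_cast; ring,
      rpow_half_nat ht0.le n]
  have e2 : s ^ (-(((n+1:ℕ):ℝ)/2)) = ((Real.sqrt s)^(n+1))⁻¹ := by
    rw [Real.rpow_neg hs.le, rpow_half_nat hs.le (n+1)]
  rw [e1, e2]
  set T := Real.sqrt t with hTdef
  set A := Real.sqrt s with hAdef
  have hA : 0 < A := Real.sqrt_pos.mpr hs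
  have hT0 : 0 ≤ T := Real.sqrt_nonneg t
  have hT1 : T ≤ 1 := by
    rw [hTdef, show (1:ℝ) = Real.sqrt 1 by simp]
    exact Real.sqrt_le_sqrt ht1
  have haT : a * T ≤ A := by
    rw [hTdef, hAdef, show a * Real.sqrt t = Real.sqrt (a^2 * t) by
      rw [Real.sqrt_mul (sq_nonneg a), Real.sqrt_sq ha0.le]]
    apply Real.sqrt_le_sqrt
    rw [hsdef]; nlinarith
  have hpre : (0:ℝ) ≤ T^n * ((A^(n+1))⁻¹) := by positivity
  calc T^n * ((A^(n+1))⁻¹) *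
        (∫ r in (0:ℝ)..D, Real.exp (-((r - a * β) ^ 2) / (c * a * (1 - a) * t)) * r ^ n)
      ≤ T^n * ((A^(n+1))⁻¹) * (K * (Real.sqrt (2*Real.pi*c) * A)) :=
        mul_le_mul_of_nonneg_left hI hpre
    _ = 2^n * Real.sqrt (2*Real.pi*c) *
          ((1 + (n.factorial:ℝ)) * (Real.sqrt (2*c))^n * T^n + D^n * ((a*T)^n / A^n)) := by
        have h2cs : Real.sqrt (2*(c*s)) = Real.sqrt (2*c) * A := by
          rw [show 2*(c*s) = (2*c)*s by ring, Real.sqrt_mul (by positivity), hAdef]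
        rw [hKdef, h2cs]
        field_simp
        ring
    _ ≤ 2^n * Real.sqrt (2*Real.pi*c) * ((1 + (n.factorial:ℝ)) * (Real.sqrt (2*c))^n + D^n) := by
        apply mul_le_mul_of_nonneg_left _ (by positivity)
        apply add_le_add
        · calc (1 + (n.factorial:ℝ)) * (Real.sqrt (2*c))^n * T^n
              ≤ (1 + (n.factorial:ℝ)) * (Real.sqrt (2*c))^n * 1 :=
                mul_le_mul_of_nonneg_left (pow_le_one₀ hT0 hT1) (by positivity)
            _ = (1 + (n.factorial:ℝ)) * (Real.sqrt (2*c))^n := mul_one _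
        · have hdiv : (a*T)^n / A^n ≤ 1 := by
            rw [div_le_one (pow_pos hA n)]
            exact pow_le_pow_left₀ (by positivity) haT n
          calc D^n * ((a*T)^n / A^n) ≤ D^n * 1 :=
                mul_le_mul_of_nonneg_left hdiv (by positivity)
            _ = D^n := mul_one _
end

section
/- Let d be a positive integer, let (M, dist) be a metric space equipped with a Borel measure m such that m(M) < ∞ and m(B(x,r)) ≤ C_v·r^d for all x ∈ M and r > 0, let c > 0 and 0 < α < d/2. Then there exists a constant C > 0 such that for all t > 0 and all x ∈ M, ∬_{M×M} t^(−d/2)·exp(−dist(x,y)²/(c·t))·dist(y,y')^(2α−d) dm(y) dm(y') ≤ C. -/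
open MeasureTheory
open scoped ENNReal

/-- `(x ^ n) ^ y = (x ^ y) ^ n` for nonnegative real base. -/
lemma aux_pow_rpow_comm {x : ℝ} (hx : 0 ≤ x) (n : ℕ) (y : ℝ) :
    (x ^ n) ^ y = (x ^ y) ^ n := by
  rw [← Real.rpow_natCast x n, ← Real.rpow_natCast (x ^ y) n,
    ← Real.rpow_mul hx, ← Real.rpow_mul hx, mul_comm]

/-- Dyadic pigeonhole in `(0,1)`. -/
lemma aux_exists_dyadic {r : ℝ} (h0 : 0 < r) (h1 : r < 1) :
    ∃ k : ℕ, (1/2 : ℝ) ^ (k+1) ≤ r ∧ r < (1/2 : ℝ) ^ k := by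
  classical
  have hex : ∃ n : ℕ, (1/2 : ℝ) ^ (n+1) ≤ r := by
    obtain ⟨n, hn⟩ := exists_pow_lt_of_lt_one h0 (by norm_num : (1/2 : ℝ) < 1)
    exact ⟨n, le_trans (pow_le_pow_of_le_one (by norm_num) (by norm_num)
      (Nat.le_succ n)) hn.le⟩
  refine ⟨Nat.find hex, Nat.find_spec hex, ?_⟩
  rcases Nat.eq_zero_or_pos (Nat.find hex) with h | h
  · rw [h]; simpa using h1
  · obtain ⟨j, hj⟩ := Nat.exists_eq_add_of_lt h
    have := Nat.find_min hex (m := j) (by omega)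
    have hfind : Nat.find hex = j + 1 := by omega
    rw [hfind]
    exact lt_of_not_ge this

/-- Dyadic pigeonhole above a positive scale. -/
lemma aux_exists_dyadic' {r s : ℝ} (hs : 0 < s) (hr : s ≤ r) :
    ∃ k : ℕ, (2:ℝ) ^ k * s ≤ r ∧ r < (2:ℝ) ^ (k+1) * s := by
  classical
  have hex : ∃ n : ℕ, r < (2:ℝ) ^ (n+1) * s := by
    obtain ⟨n, hn⟩ := pow_unbounded_of_one_lt (r / s) (by norm_num : (1:ℝ) < 2)
    refine ⟨n, ?_⟩
    have h1 : r < 2 ^ n * s := by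
      have := (div_lt_iff₀ hs).mp hn
      linarith
    have h2 : (2:ℝ) ^ n * s ≤ 2 ^ (n+1) * s := by
      have : (2:ℝ) ^ n ≤ 2 ^ (n+1) := pow_le_pow_right₀ (by norm_num) (Nat.le_succ n)
      nlinarith
    linarith
  refine ⟨Nat.find hex, ?_, Nat.find_spec hex⟩
  rcases Nat.eq_zero_or_pos (Nat.find hex) with h | h
  · rw [h]; simpa using hr
  · obtain ⟨j, hj⟩ := Nat.exists_eq_add_of_lt h
    have := Nat.find_min hex (m := j) (by omega)
    have hfind : Nat.find hex = j + 1 := by omega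
    rw [hfind]
    exact le_of_not_gt this

/-- Uniform bound for the Riesz-type kernel integral. -/
lemma aux_riesz_bound {M : Type*} [MetricSpace M] [MeasurableSpace M] [BorelSpace M]
    (m : Measure M) (hfin : m Set.univ < ⊤)
    (d : ℕ) (C_v : ℝ) (hCv : 0 < C_v)
    (hvol : ∀ (x : M) (r : ℝ), 0 < r → m (Metric.ball x r) ≤ ENNReal.ofReal (C_v * r ^ d))
    (α : ℝ) (hα : 0 < α) (hαd : α < (d:ℝ) / 2) :
    ∃ K : ℝ≥0∞, K ≠ ⊤ ∧ ∀ y : M,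
      ∫⁻ y', ENNReal.ofReal (dist y y' ^ (2 * α - (d:ℝ))) ∂m ≤ K := by
  classical
  set β : ℝ := (d:ℝ) - 2 * α with hβdef
  have hβ : 0 < β := by simp only [hβdef]; linarith
  have hβd : β < (d:ℝ) := by simp only [hβdef]; linarith
  have hexp : 2 * α - (d:ℝ) = -β := by simp only [hβdef]; ring
  set B : ℝ := (2:ℝ) ^ β with hBdef
  have hBpos : 0 < B := Real.rpow_pos_of_pos (by norm_num) _
  set u : ℕ → ℝ := fun k => C_v * ((1/2 : ℝ) ^ k) ^ d * B ^ (k+1) with hu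
  have hu_nonneg : ∀ k, 0 ≤ u k := by
    intro k
    have : (0:ℝ) ≤ ((1/2:ℝ)^k)^d := by positivity
    positivity
  set ρ : ℝ := (1/2 : ℝ) ^ d * B with hρdef
  have hρ0 : 0 ≤ ρ := by positivity
  have hρ1 : ρ < 1 := by
    have h2d : B < (2:ℝ) ^ (d:ℝ) := Real.rpow_lt_rpow_of_exponent_lt (by norm_num) hβd
    have h2d' : ((2:ℝ) ^ (d:ℝ)) = (2:ℝ) ^ d := Real.rpow_natCast 2 d
    have hlt : B < (2:ℝ) ^ d := by rw [← h2d']; exact h2d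
    have hq : ((1/2:ℝ) ^ d) = ((2:ℝ) ^ d)⁻¹ := by
      rw [one_div, inv_pow]
    rw [hρdef, hq]
    rw [inv_mul_lt_iff₀ (by positivity), mul_one]
    exact hlt
  have hu_eq : ∀ k, u k = (C_v * B) * ρ ^ k := by
    intro k
    simp only [hu, hρdef]
    rw [pow_succ, ← pow_right_comm, mul_pow]
    ring
  have hu_sum : Summable u := by
    refine Summable.congr ?_ (fun k => (hu_eq k).symm)
    exact (summable_geometric_of_lt_one hρ0 hρ1).mul_left _
  refine ⟨m Set.univ + ∑' k : ℕ, ENNReal.ofReal (u k), ?_, ?_⟩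
  · rw [← ENNReal.ofReal_tsum_of_nonneg hu_nonneg hu_sum]
    exact ENNReal.add_ne_top.mpr ⟨hfin.ne, ENNReal.ofReal_ne_top⟩
  · intro y
    have hptwise : ∀ y' : M, ENNReal.ofReal (dist y y' ^ (2 * α - (d:ℝ))) ≤
        1 + ∑' k : ℕ, (Metric.ball y ((1/2:ℝ) ^ k)).indicator
          (fun _ => ENNReal.ofReal (B ^ (k+1))) y' := by
      intro y'
      by_cases h0 : dist y y' = 0
      · rw [hexp, h0, Real.zero_rpow (by linarith : -β ≠ 0)]
        simp
      by_cases h1 : 1 ≤ dist y y'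
      · have hle1 : dist y y' ^ (2 * α - (d:ℝ)) ≤ 1 := by
          rw [hexp]
          exact Real.rpow_le_one_of_one_le_of_nonpos h1 (by linarith)
        calc ENNReal.ofReal (dist y y' ^ (2 * α - (d:ℝ)))
            ≤ ENNReal.ofReal 1 := ENNReal.ofReal_le_ofReal hle1
          _ = 1 := ENNReal.ofReal_one
          _ ≤ _ := le_self_add
      push_neg at h1
      have h0' : 0 < dist y y' := lt_of_le_of_ne dist_nonneg (Ne.symm h0)
      obtain ⟨k, hk1, hk2⟩ := aux_exists_dyadic h0' h1
      have hmem : y' ∈ Metric.ball y ((1/2:ℝ) ^ k) := by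
        rw [Metric.mem_ball, dist_comm]; exact hk2
      have hle : dist y y' ^ (2 * α - (d:ℝ)) ≤ B ^ (k+1) := by
        rw [hexp]
        calc dist y y' ^ (-β)
            ≤ ((1/2:ℝ) ^ (k+1)) ^ (-β) :=
              Real.rpow_le_rpow_of_nonpos (by positivity) hk1 (by linarith)
          _ = ((1/2:ℝ) ^ (-β)) ^ (k+1) := aux_pow_rpow_comm (by norm_num) _ _
          _ = B ^ (k+1) := by
              rw [hBdef]
              congr 1
              rw [one_div, Real.inv_rpow (by norm_num), Real.rpow_neg (by norm_num), inv_inv]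
      calc ENNReal.ofReal (dist y y' ^ (2 * α - (d:ℝ)))
          ≤ ENNReal.ofReal (B ^ (k+1)) := ENNReal.ofReal_le_ofReal hle
        _ = (Metric.ball y ((1/2:ℝ) ^ k)).indicator
              (fun _ => ENNReal.ofReal (B ^ (k+1))) y' := by
            rw [Set.indicator_of_mem hmem]
        _ ≤ ∑' k : ℕ, (Metric.ball y ((1/2:ℝ) ^ k)).indicator
              (fun _ => ENNReal.ofReal (B ^ (k+1))) y' :=
            ENNReal.le_tsum k
        _ ≤ _ := le_add_self
    calc ∫⁻ y', ENNReal.ofReal (dist y y' ^ (2 * α - (d:ℝ))) ∂m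
        ≤ ∫⁻ y', (1 + ∑' k : ℕ, (Metric.ball y ((1/2:ℝ) ^ k)).indicator
            (fun _ => ENNReal.ofReal (B ^ (k+1))) y') ∂m := lintegral_mono hptwise
      _ = m Set.univ + ∑' k : ℕ, ENNReal.ofReal (B ^ (k+1)) * m (Metric.ball y ((1/2:ℝ) ^ k)) := by
          rw [lintegral_add_left measurable_const, lintegral_one,
            lintegral_tsum (fun k => (measurable_const.indicator measurableSet_ball).aemeasurable)]
          congr 1
          exact tsum_congr fun k => lintegral_indicator_const measurableSet_ball _
      _ ≤ m Set.univ + ∑' k : ℕ, ENNReal.ofReal (u k) := by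
          refine add_le_add_right (ENNReal.tsum_le_tsum fun k => ?_) _
          calc ENNReal.ofReal (B ^ (k+1)) * m (Metric.ball y ((1/2:ℝ) ^ k))
              ≤ ENNReal.ofReal (B ^ (k+1)) * ENNReal.ofReal (C_v * ((1/2:ℝ) ^ k) ^ d) :=
                mul_le_mul_right (hvol y _ (by positivity)) _
            _ = ENNReal.ofReal (u k) := by
                rw [← ENNReal.ofReal_mul (by positivity)]
                congr 1
                simp only [hu]; ring

/-- Uniform bound for the Gaussian integral, normalized by `t^{-d/2}`. -/
lemma aux_gauss_bound {M : Type*} [MetricSpace M] [MeasurableSpace M] [BorelSpace M]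
    (m : Measure M)
    (d : ℕ) (C_v : ℝ) (hCv : 0 < C_v)
    (hvol : ∀ (x : M) (r : ℝ), 0 < r → m (Metric.ball x r) ≤ ENNReal.ofReal (C_v * r ^ d))
    (c : ℝ) (hc : 0 < c) :
    ∃ K : ℝ≥0∞, K ≠ ⊤ ∧ ∀ t > 0, ∀ x : M,
      ∫⁻ y, ENNReal.ofReal (t ^ (-((d:ℝ) / 2)) *
        Real.exp (-(dist x y ^ 2) / (c * t))) ∂m ≤ K := by
  classical
  set e : ℕ → ℝ := fun k => Real.exp (-(4:ℝ) ^ k / c) with he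
  have he_nonneg : ∀ k, 0 ≤ e k := fun k => (Real.exp_pos _).le
  have he_le1 : ∀ k, e k ≤ 1 := by
    intro k
    apply Real.exp_le_one_iff.mpr
    rw [neg_div]
    have h0 : (0:ℝ) ≤ (4:ℝ) ^ k / c := by positivity
    linarith
  set v : ℕ → ℝ := fun k => C_v * ((2:ℝ) ^ (k+1)) ^ d * e k with hv
  have hv_nonneg : ∀ k, 0 ≤ v k := by
    intro k
    have h1 : (0:ℝ) ≤ ((2:ℝ) ^ (k+1)) ^ d := by positivity
    have := he_nonneg k
    positivity
  -- summability of v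
  set A : ℝ := C_v * 2 ^ d * (((d+1).factorial : ℝ) * c ^ (d+1)) with hA
  set ρ : ℝ := (2:ℝ) ^ d * (1/4 : ℝ) ^ (d+1) with hρ
  have hρ0 : 0 ≤ ρ := by positivity
  have hρ1 : ρ < 1 := by
    rw [hρ]
    have h4 : ((1/4:ℝ) ^ (d+1)) = ((4:ℝ) ^ (d+1))⁻¹ := by rw [one_div, inv_pow]
    rw [h4, mul_inv_lt_iff₀' (by positivity), mul_one]
    calc (2:ℝ) ^ d ≤ 4 ^ d := pow_le_pow_left₀ (by norm_num) (by norm_num) d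
      _ < 4 ^ (d+1) := pow_lt_pow_right₀ (by norm_num) (Nat.lt_succ_self d)
  have he_bound : ∀ k, e k ≤ (((d+1).factorial : ℝ) * c ^ (d+1)) * ((1/4:ℝ) ^ (d+1)) ^ k := by
    intro k
    have hx : (0:ℝ) ≤ (4:ℝ) ^ k / c := by positivity
    have h1 : ((4:ℝ) ^ k / c) ^ (d+1) / ((d+1).factorial : ℝ) ≤ Real.exp ((4:ℝ) ^ k / c) :=
      Real.pow_div_factorial_le_exp _ hx (d+1)
    have hpos : (0:ℝ) < ((4:ℝ) ^ k / c) ^ (d+1) / ((d+1).factorial : ℝ) := by positivity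
    have h2 : e k ≤ (((4:ℝ) ^ k / c) ^ (d+1) / ((d+1).factorial : ℝ))⁻¹ := by
      have he' : e k = (Real.exp ((4:ℝ) ^ k / c))⁻¹ := by
        simp only [he]
        rw [neg_div, Real.exp_neg]
      rw [he']
      exact inv_anti₀ hpos h1
    refine h2.trans (le_of_eq ?_)
    have h4 : (((4:ℝ) ^ k) / c) ^ (d+1) = (4:ℝ) ^ (k*(d+1)) / c ^ (d+1) := by
      rw [div_pow, ← pow_mul]
    have h5 : (((1/4:ℝ)) ^ (d+1)) ^ k = ((4:ℝ) ^ (k*(d+1)))⁻¹ := by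
      rw [one_div, inv_pow, inv_pow, ← pow_mul, mul_comm (d+1) k]
    rw [h4, div_div, inv_div, h5, div_eq_mul_inv]
    ring
  have hv_le : ∀ k, v k ≤ A * ρ ^ k := by
    intro k
    have h1 : ((2:ℝ) ^ (k+1)) ^ d = 2 ^ d * ((2:ℝ) ^ d) ^ k := by
      rw [← pow_right_comm, pow_succ]
      ring
    calc v k = C_v * ((2:ℝ) ^ (k+1)) ^ d * e k := rfl
      _ ≤ C_v * ((2:ℝ) ^ (k+1)) ^ d * ((((d+1).factorial : ℝ) * c ^ (d+1)) * ((1/4:ℝ) ^ (d+1)) ^ k) := by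
          apply mul_le_mul_of_nonneg_left (he_bound k)
          positivity
      _ = A * ρ ^ k := by
          rw [h1, hA, hρ, mul_pow]
          ring
  have hv_sum : Summable v :=
    Summable.of_nonneg_of_le hv_nonneg hv_le
      ((summable_geometric_of_lt_one hρ0 hρ1).mul_left _)
  refine ⟨ENNReal.ofReal (C_v * 2 ^ d) + ∑' k : ℕ, ENNReal.ofReal (v k), ?_, ?_⟩
  · rw [← ENNReal.ofReal_tsum_of_nonneg hv_nonneg hv_sum]
    exact ENNReal.add_ne_top.mpr ⟨ENNReal.ofReal_ne_top, ENNReal.ofReal_ne_top⟩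
  · intro t ht x
    set s : ℝ := Real.sqrt t with hs
    have hspos : 0 < s := Real.sqrt_pos.mpr ht
    have hsd : (s:ℝ) ^ d = t ^ ((d:ℝ) / 2) := by
      rw [hs, Real.sqrt_eq_rpow, ← Real.rpow_natCast (t ^ (1/2 : ℝ)) d,
        ← Real.rpow_mul ht.le]
      congr 1
      ring
    have hts : t ^ (-((d:ℝ) / 2)) * t ^ ((d:ℝ) / 2) = 1 := by
      rw [← Real.rpow_add ht]
      simp
    have htneg : (0:ℝ) ≤ t ^ (-((d:ℝ) / 2)) := (Real.rpow_pos_of_pos ht _).le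
    -- pointwise bound on the Gaussian
    have hptwise : ∀ y : M, ENNReal.ofReal (Real.exp (-(dist x y ^ 2) / (c * t))) ≤
        (Metric.ball x (2 * s)).indicator (fun _ => (1:ℝ≥0∞)) y +
        ∑' k : ℕ, (Metric.ball x ((2:ℝ) ^ (k+1) * s)).indicator
          (fun _ => ENNReal.ofReal (e k)) y := by
      intro y
      by_cases hr : dist x y < s
      · have hmem : y ∈ Metric.ball x (2 * s) := by
          rw [Metric.mem_ball, dist_comm]
          · linarith
        have hexp1 : Real.exp (-(dist x y ^ 2) / (c * t)) ≤ 1 := by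
          apply Real.exp_le_one_iff.mpr
          have h1 : (0:ℝ) ≤ dist x y ^ 2 / (c * t) := by positivity
          rw [neg_div]
          linarith
        calc ENNReal.ofReal (Real.exp (-(dist x y ^ 2) / (c * t)))
            ≤ ENNReal.ofReal 1 := ENNReal.ofReal_le_ofReal hexp1
          _ = (Metric.ball x (2 * s)).indicator (fun _ => (1:ℝ≥0∞)) y := by
              rw [Set.indicator_of_mem hmem, ENNReal.ofReal_one]
          _ ≤ _ := le_self_add
      push_neg at hr
      obtain ⟨k, hk1, hk2⟩ := aux_exists_dyadic' hspos hr
      have hmem : y ∈ Metric.ball x ((2:ℝ) ^ (k+1) * s) := by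
        rw [Metric.mem_ball, dist_comm]; exact hk2
      have hr2 : (4:ℝ) ^ k * t ≤ dist x y ^ 2 := by
        have h1 : ((2:ℝ) ^ k * s) ^ 2 ≤ dist x y ^ 2 := by
          apply pow_le_pow_left₀ (by positivity) hk1
        have h2 : ((2:ℝ) ^ k * s) ^ 2 = (4:ℝ) ^ k * t := by
          rw [mul_pow, ← pow_right_comm, Real.sq_sqrt ht.le]
          norm_num
        linarith
      have hexp2 : Real.exp (-(dist x y ^ 2) / (c * t)) ≤ e k := by
        apply Real.exp_le_exp.mpr
        have hct : 0 < c * t := by positivity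
        have h3 : (4:ℝ) ^ k / c = (4:ℝ) ^ k * t / (c * t) := by
          field_simp
        have h4 : (4:ℝ) ^ k / c ≤ dist x y ^ 2 / (c * t) := by
          rw [h3]
          exact div_le_div_of_nonneg_right hr2 hct.le
        rw [neg_div, neg_div]
        exact neg_le_neg h4
      calc ENNReal.ofReal (Real.exp (-(dist x y ^ 2) / (c * t)))
          ≤ ENNReal.ofReal (e k) := ENNReal.ofReal_le_ofReal hexp2
        _ = (Metric.ball x ((2:ℝ) ^ (k+1) * s)).indicator
              (fun _ => ENNReal.ofReal (e k)) y := by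
            rw [Set.indicator_of_mem hmem]
        _ ≤ ∑' k : ℕ, (Metric.ball x ((2:ℝ) ^ (k+1) * s)).indicator
              (fun _ => ENNReal.ofReal (e k)) y := ENNReal.le_tsum k
        _ ≤ _ := le_add_self
    -- integral bound for the Gaussian factor alone
    have hint : ∫⁻ y, ENNReal.ofReal (Real.exp (-(dist x y ^ 2) / (c * t))) ∂m ≤
        ENNReal.ofReal (t ^ ((d:ℝ) / 2)) *
          (ENNReal.ofReal (C_v * 2 ^ d) + ∑' k : ℕ, ENNReal.ofReal (v k)) := by
      calc ∫⁻ y, ENNReal.ofReal (Real.exp (-(dist x y ^ 2) / (c * t))) ∂m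
          ≤ ∫⁻ y, ((Metric.ball x (2 * s)).indicator (fun _ => (1:ℝ≥0∞)) y +
              ∑' k : ℕ, (Metric.ball x ((2:ℝ) ^ (k+1) * s)).indicator
                (fun _ => ENNReal.ofReal (e k)) y) ∂m := lintegral_mono hptwise
        _ = m (Metric.ball x (2 * s)) +
            ∑' k : ℕ, ENNReal.ofReal (e k) * m (Metric.ball x ((2:ℝ) ^ (k+1) * s)) := by
            rw [lintegral_add_left (measurable_const.indicator measurableSet_ball),
              lintegral_indicator_const measurableSet_ball, one_mul,
              lintegral_tsum (fun k =>
                (measurable_const.indicator measurableSet_ball).aemeasurable)]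
            congr 1
            exact tsum_congr fun k => lintegral_indicator_const measurableSet_ball _
        _ ≤ ENNReal.ofReal (C_v * (2 * s) ^ d) +
            ∑' k : ℕ, ENNReal.ofReal (e k) * ENNReal.ofReal (C_v * ((2:ℝ) ^ (k+1) * s) ^ d) :=
            add_le_add (hvol x _ (by positivity))
              (ENNReal.tsum_le_tsum fun k => mul_le_mul_right (hvol x _ (by positivity)) _)
        _ = ENNReal.ofReal (t ^ ((d:ℝ) / 2)) * ENNReal.ofReal (C_v * 2 ^ d) +
            ∑' k : ℕ, ENNReal.ofReal (t ^ ((d:ℝ) / 2)) * ENNReal.ofReal (v k) := by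
            congr 1
            · rw [← ENNReal.ofReal_mul (by positivity)]
              congr 1
              rw [mul_pow, ← hsd]; ring
            · refine tsum_congr fun k => ?_
              rw [← ENNReal.ofReal_mul (he_nonneg k), ← ENNReal.ofReal_mul (by positivity)]
              congr 1
              rw [mul_pow, ← hsd]
              simp only [hv]; ring
        _ = ENNReal.ofReal (t ^ ((d:ℝ) / 2)) *
            (ENNReal.ofReal (C_v * 2 ^ d) + ∑' k : ℕ, ENNReal.ofReal (v k)) := by
            rw [ENNReal.tsum_mul_left, mul_add]
    calc ∫⁻ y, ENNReal.ofReal (t ^ (-((d:ℝ) / 2)) *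
          Real.exp (-(dist x y ^ 2) / (c * t))) ∂m
        = ENNReal.ofReal (t ^ (-((d:ℝ) / 2))) *
            ∫⁻ y, ENNReal.ofReal (Real.exp (-(dist x y ^ 2) / (c * t))) ∂m := by
          simp_rw [ENNReal.ofReal_mul htneg]
          exact lintegral_const_mul' _ _ ENNReal.ofReal_ne_top
      _ ≤ ENNReal.ofReal (t ^ (-((d:ℝ) / 2))) * (ENNReal.ofReal (t ^ ((d:ℝ) / 2)) *
            (ENNReal.ofReal (C_v * 2 ^ d) + ∑' k : ℕ, ENNReal.ofReal (v k))) :=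
          mul_le_mul_right hint _
      _ = (ENNReal.ofReal (t ^ (-((d:ℝ) / 2))) * ENNReal.ofReal (t ^ ((d:ℝ) / 2))) *
            (ENNReal.ofReal (C_v * 2 ^ d) + ∑' k : ℕ, ENNReal.ofReal (v k)) :=
          (mul_assoc _ _ _).symm
      _ = ENNReal.ofReal (C_v * 2 ^ d) + ∑' k : ℕ, ENNReal.ofReal (v k) := by
          rw [← ENNReal.ofReal_mul htneg, hts, ENNReal.ofReal_one, one_mul]

/-- Estimate (3.12) of the paper, metric-measure form: one Gaussian factor
integrated against the Riesz-type kernel in two variables. -/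
theorem gaussian_riesz_double_integral_one_factor
    (d : ℕ) (hd : 1 ≤ d) {M : Type*} [MetricSpace M] [MeasurableSpace M] [BorelSpace M]
    (m : Measure M) (hfin : m Set.univ < ⊤)
    (C_v : ℝ) (hCv : 0 < C_v)
    (hvol : ∀ (x : M) (r : ℝ), 0 < r → m (Metric.ball x r) ≤ ENNReal.ofReal (C_v * r ^ d))
    (c : ℝ) (hc : 0 < c) (α : ℝ) (hα : 0 < α) (hαd : α < (d:ℝ) / 2) :
    ∃ C > 0, ∀ t > 0, ∀ x : M,
      ∫⁻ y, ∫⁻ y', ENNReal.ofReal (t ^ (-((d:ℝ) / 2)) *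
          Real.exp (-(dist x y ^ 2) / (c * t)) * dist y y' ^ (2 * α - (d:ℝ))) ∂m ∂m
        ≤ ENNReal.ofReal C := by
  obtain ⟨K1, hK1top, hK1⟩ := aux_riesz_bound m hfin d C_v hCv hvol α hα hαd
  obtain ⟨K2, hK2top, hK2⟩ := aux_gauss_bound m d C_v hCv hvol c hc
  refine ⟨(K2 * K1).toReal + 1, by positivity, ?_⟩
  intro t ht x
  have key : ∀ y : M,
      ∫⁻ y', ENNReal.ofReal (t ^ (-((d:ℝ) / 2)) *
        Real.exp (-(dist x y ^ 2) / (c * t)) * dist y y' ^ (2 * α - (d:ℝ))) ∂m ≤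
      ENNReal.ofReal (t ^ (-((d:ℝ) / 2)) * Real.exp (-(dist x y ^ 2) / (c * t))) * K1 := by
    intro y
    have h0 : 0 ≤ t ^ (-((d:ℝ) / 2)) * Real.exp (-(dist x y ^ 2) / (c * t)) :=
      mul_nonneg (Real.rpow_pos_of_pos ht _).le (Real.exp_pos _).le
    calc ∫⁻ y', ENNReal.ofReal (t ^ (-((d:ℝ) / 2)) *
          Real.exp (-(dist x y ^ 2) / (c * t)) * dist y y' ^ (2 * α - (d:ℝ))) ∂m
        = ∫⁻ y', ENNReal.ofReal (t ^ (-((d:ℝ) / 2)) * Real.exp (-(dist x y ^ 2) / (c * t))) *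
            ENNReal.ofReal (dist y y' ^ (2 * α - (d:ℝ))) ∂m := by
          simp_rw [ENNReal.ofReal_mul h0]
      _ = ENNReal.ofReal (t ^ (-((d:ℝ) / 2)) * Real.exp (-(dist x y ^ 2) / (c * t))) *
            ∫⁻ y', ENNReal.ofReal (dist y y' ^ (2 * α - (d:ℝ))) ∂m :=
          lintegral_const_mul' _ _ ENNReal.ofReal_ne_top
      _ ≤ _ := mul_le_mul_right (hK1 y) _
  calc ∫⁻ y, ∫⁻ y', ENNReal.ofReal (t ^ (-((d:ℝ) / 2)) *
          Real.exp (-(dist x y ^ 2) / (c * t)) * dist y y' ^ (2 * α - (d:ℝ))) ∂m ∂m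
      ≤ ∫⁻ y, ENNReal.ofReal (t ^ (-((d:ℝ) / 2)) *
          Real.exp (-(dist x y ^ 2) / (c * t))) * K1 ∂m := lintegral_mono key
    _ = (∫⁻ y, ENNReal.ofReal (t ^ (-((d:ℝ) / 2)) *
          Real.exp (-(dist x y ^ 2) / (c * t))) ∂m) * K1 :=
        lintegral_mul_const' K1 _ hK1top
    _ ≤ K2 * K1 := mul_le_mul_left (hK2 t ht x) _
    _ ≤ ENNReal.ofReal ((K2 * K1).toReal + 1) := by
        have hne : K2 * K1 ≠ ⊤ := ENNReal.mul_ne_top hK2top hK1top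
        calc K2 * K1 = ENNReal.ofReal ((K2 * K1).toReal) := (ENNReal.ofReal_toReal hne).symm
          _ ≤ _ := ENNReal.ofReal_le_ofReal (by linarith [ENNReal.toReal_nonneg (a := K2 * K1)])
end

section
/- Let d be a positive integer, let (M, dist) be a metric space equipped with a Borel measure m such that m(M) < ∞ and m(B(x,r)) ≤ C_v·r^d for all x ∈ M and r > 0, let c > 0 and 0 < α < d/2. Then there exists a constant C > 0 such that for all t > 0 and all x, x' ∈ M, ∬_{M×M} t^(−d/2)·exp(−dist(x,y)²/(c·t))·dist(y,y')^(2α−d)·t^(−d/2)·exp(−dist(x',y')²/(c·t)) dm(y) dm(y') ≤ C·(t^((2α−d)/2) + 1). -/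
/-!
Split the Riesz kernel at the parabolic scale,
`dist y y' ^ β ≤ √t ^ β + 𝟙{dist y y' ≤ √t} · dist y y' ^ β` with `β = 2α - d < 0`.
Each Gaussian factor has `m`-mass `O(1)` uniformly in `t` and in its centre (sum the volume bound
over the balls of radius `(k + 1)√(ct)`, on whose `k`-th shell the Gaussian is at most `e^{-k}`),
so the far part is `O(√t ^ β)`. In the near part bound the second Gaussian by `t^{-d/2}`; the
truncated Riesz kernel has mass `O(√t ^ (β + d))` by summing the volume bound over dyadic shells,
a geometric series because `β > -d`. Both parts are `O(√t ^ β)`.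
-/

open MeasureTheory Metric
open scoped ENNReal

theorem exists_dyadic_shell {r R : ℝ} (hr : 0 < r) (hrR : r ≤ R) :
    ∃ n : ℕ, R * (1 / 2) ^ n < r ∧ r ≤ 2 * (R * (1 / 2) ^ n) := by
  have hR : 0 < R := hr.trans_le hrR
  obtain ⟨n, hn_lt, hn_le⟩ := exists_nat_pow_near_of_lt_one (div_pos hr hR)
    ((div_le_one hR).2 hrR) (by norm_num : (0 : ℝ) < 1 / 2) (by norm_num : (1 / 2 : ℝ) < 1)
  refine ⟨n + 1, ?_, ?_⟩
  · rw [mul_comm]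
    exact (lt_div_iff₀ hR).1 hn_lt
  · have := (div_le_iff₀ hR).1 hn_le
    rw [pow_succ]
    linarith

section VolumeGrowth

variable {M : Type*} [PseudoMetricSpace M] [MeasurableSpace M] [OpensMeasurableSpace M]
  (m : Measure M)

theorem lintegral_le_tsum_mul_measure_ball {f : M → ℝ≥0∞} {x : M} {r : ℕ → ℝ}
    {a : ℕ → ℝ≥0∞} (hf : ∀ y, f y ≠ 0 → ∃ k, dist y x < r k ∧ f y ≤ a k) :
    ∫⁻ y, f y ∂m ≤ ∑' k, a k * m (ball x (r k)) := by
  have hf_le : ∀ y, f y ≤ ∑' k, (ball x (r k)).indicator (fun _ ↦ a k) y := by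
    intro y
    rcases eq_or_ne (f y) 0 with h | h
    · simp [h]
    obtain ⟨k, hk, hfk⟩ := hf y h
    calc f y ≤ (ball x (r k)).indicator (fun _ ↦ a k) y := by
          rwa [Set.indicator_of_mem (mem_ball.2 hk)]
      _ ≤ _ := ENNReal.le_tsum k
  calc ∫⁻ y, f y ∂m ≤ ∫⁻ y, ∑' k, (ball x (r k)).indicator (fun _ ↦ a k) y ∂m :=
        lintegral_mono hf_le
    _ = ∑' k, a k * m (ball x (r k)) := by
        rw [lintegral_tsum fun k ↦ (measurable_const.indicator measurableSet_ball).aemeasurable]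
        exact tsum_congr fun k ↦ lintegral_indicator_const measurableSet_ball _

theorem lintegral_le_ofReal_tsum_of_measure_ball_le {d : ℕ} {C_v : ℝ} (hCv : 0 ≤ C_v)
    (hvol : ∀ (x : M) (r : ℝ), 0 < r → m (ball x r) ≤ ENNReal.ofReal (C_v * r ^ d))
    {f : M → ℝ≥0∞} {x : M} {r a : ℕ → ℝ} (hr : ∀ k, 0 < r k) (ha : ∀ k, 0 ≤ a k)
    (hsum : Summable fun k ↦ a k * r k ^ d)
    (hf : ∀ y, f y ≠ 0 → ∃ k, dist y x < r k ∧ f y ≤ ENNReal.ofReal (a k)) :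
    ∫⁻ y, f y ∂m ≤ ENNReal.ofReal (C_v * ∑' k, a k * r k ^ d) := by
  calc ∫⁻ y, f y ∂m ≤ ∑' k, ENNReal.ofReal (a k) * m (ball x (r k)) :=
        lintegral_le_tsum_mul_measure_ball m hf
    _ ≤ ∑' k, ENNReal.ofReal (C_v * (a k * r k ^ d)) := by
        refine ENNReal.tsum_le_tsum fun k ↦ ?_
        rw [mul_left_comm, ENNReal.ofReal_mul (ha k)]
        exact mul_le_mul_right (hvol x _ (hr k)) _
    _ = ENNReal.ofReal (C_v * ∑' k, a k * r k ^ d) := by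
        have hterm_nonneg : ∀ k, 0 ≤ C_v * (a k * r k ^ d) :=
          fun k ↦ mul_nonneg hCv (mul_nonneg (ha k) (pow_nonneg (hr k).le d))
        rw [← ENNReal.ofReal_tsum_of_nonneg hterm_nonneg (hsum.mul_left C_v), tsum_mul_left]

theorem summable_exp_neg_mul_add_one_pow (d : ℕ) :
    Summable fun k : ℕ ↦ Real.exp (-k) * ((k : ℝ) + 1) ^ d := by
  have h := (summable_nat_add_iff 1).2 (Real.summable_pow_mul_exp_neg_nat_mul d one_pos)
  refine (h.mul_left (Real.exp 1)).congr fun k ↦ ?_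
  simp only [Nat.cast_add, Nat.cast_one]
  rw [mul_left_comm, ← Real.exp_add]
  ring_nf

theorem exists_lintegral_exp_neg_dist_sq_div_le {d : ℕ} {C_v : ℝ} (hCv : 0 < C_v)
    (hvol : ∀ (x : M) (r : ℝ), 0 < r → m (ball x r) ≤ ENNReal.ofReal (C_v * r ^ d)) :
    ∃ A > 0, ∀ s > 0, ∀ x : M,
      ∫⁻ y, ENNReal.ofReal (Real.exp (-(dist x y ^ 2) / s)) ∂m ≤ ENNReal.ofReal (A * √s ^ d) := by
  have hS := summable_exp_neg_mul_add_one_pow d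
  have hS_pos : 0 < ∑' k : ℕ, Real.exp (-k) * ((k : ℝ) + 1) ^ d :=
    hS.tsum_pos (fun k ↦ by positivity) 0 (by simp)
  refine ⟨C_v * ∑' k : ℕ, Real.exp (-k) * ((k : ℝ) + 1) ^ d, by positivity, fun s hs x ↦ ?_⟩
  have hσ : 0 < √s := Real.sqrt_pos.2 hs
  have hr_pow : ∀ k : ℕ, Real.exp (-k) * (((k : ℝ) + 1) * √s) ^ d
      = Real.exp (-k) * ((k : ℝ) + 1) ^ d * √s ^ d := fun k ↦ by rw [mul_pow, mul_assoc]
  refine (lintegral_le_ofReal_tsum_of_measure_ball_le m hCv.le hvol (x := x)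
    (r := fun k ↦ ((k : ℝ) + 1) * √s) (a := fun k ↦ Real.exp (-k)) (fun k ↦ by positivity)
    (fun k ↦ (Real.exp_pos _).le) (by simpa only [hr_pow] using hS.mul_right (√s ^ d))
    fun y _ ↦ ⟨⌊dist y x / √s⌋₊, ?_, ?_⟩).trans_eq ?_
  · exact (div_lt_iff₀ hσ).1 (Nat.lt_floor_add_one _)
  · refine ENNReal.ofReal_le_ofReal (Real.exp_le_exp.2 ?_)
    set k := ⌊dist y x / √s⌋₊
    have hk : (k : ℝ) ≤ dist y x / √s := Nat.floor_le (by positivity)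
    have hk_sq : (k : ℝ) ≤ (k : ℝ) ^ 2 := by exact_mod_cast Nat.le_self_pow two_ne_zero k
    have : (dist y x / √s) ^ 2 = dist x y ^ 2 / s := by
      rw [div_pow, Real.sq_sqrt hs.le, dist_comm]
    rw [neg_div, neg_le_neg_iff, ← this]
    nlinarith [Nat.cast_nonneg (α := ℝ) k]
  · simp_rw [hr_pow]
    rw [tsum_mul_right, mul_assoc]

theorem exists_lintegral_rpow_mul_exp_neg_dist_sq_div_le {d : ℕ} {C_v : ℝ} (hCv : 0 < C_v)
    (hvol : ∀ (x : M) (r : ℝ), 0 < r → m (ball x r) ≤ ENNReal.ofReal (C_v * r ^ d))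
    {c : ℝ} (hc : 0 < c) :
    ∃ A > 0, ∀ t > 0, ∀ x : M,
      ∫⁻ y, ENNReal.ofReal (t ^ (-((d : ℝ) / 2)) * Real.exp (-(dist x y ^ 2) / (c * t))) ∂m
        ≤ ENNReal.ofReal A := by
  obtain ⟨A, hA, hgauss⟩ := exists_lintegral_exp_neg_dist_sq_div_le m hCv hvol
  refine ⟨A * √c ^ d, by positivity, fun t ht x ↦ ?_⟩
  simp only [ENNReal.ofReal_mul (Real.rpow_nonneg ht.le _)]
  rw [lintegral_const_mul' _ _ ENNReal.ofReal_ne_top]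
  calc ENNReal.ofReal (t ^ (-((d : ℝ) / 2)))
        * ∫⁻ y, ENNReal.ofReal (Real.exp (-(dist x y ^ 2) / (c * t))) ∂m
      ≤ ENNReal.ofReal (t ^ (-((d : ℝ) / 2))) * ENNReal.ofReal (A * √(c * t) ^ d) := by
        gcongr
        exact hgauss _ (by positivity) x
    _ = ENNReal.ofReal (A * √c ^ d) := by
        rw [← ENNReal.ofReal_mul (by positivity), Real.sqrt_mul hc.le, mul_pow,
          ← Real.rpow_natCast √t, ← Real.rpow_div_two_eq_sqrt _ ht.le, Real.rpow_neg ht.le]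
        field_simp

theorem exists_lintegral_indicator_closedBall_dist_rpow_le {d : ℕ} {C_v : ℝ} (hCv : 0 < C_v)
    (hvol : ∀ (x : M) (r : ℝ), 0 < r → m (ball x r) ≤ ENNReal.ofReal (C_v * r ^ d))
    {β : ℝ} (hβ : β < 0) (hβd : -(d : ℝ) < β) :
    ∃ B > 0, ∀ R > 0, ∀ y : M,
      ∫⁻ y', (closedBall y R).indicator (fun y' ↦ ENNReal.ofReal (dist y y' ^ β)) y' ∂m
        ≤ ENNReal.ofReal (B * R ^ (β + d)) := by
  set q : ℝ := (1 / 2) ^ (β + d)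
  have hq0 : 0 ≤ q := by positivity
  have hq1 : q < 1 := Real.rpow_lt_one (by norm_num) (by norm_num) (by linarith)
  have h1q : 0 < 1 - q := sub_pos.2 hq1
  refine ⟨C_v * 4 ^ d * (1 - q)⁻¹, by positivity, fun R hR y ↦ ?_⟩
  set ρ : ℕ → ℝ := fun k ↦ R * (1 / 2) ^ k
  have hρ : ∀ k, 0 < ρ k := fun k ↦ by positivity
  have hterm : ∀ k, ρ k ^ β * (4 * ρ k) ^ d = 4 ^ d * R ^ (β + d) * q ^ k := by
    intro k
    rw [mul_pow, ← Real.rpow_natCast (ρ k) d, mul_left_comm, ← Real.rpow_add (hρ k),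
      Real.mul_rpow hR.le (by positivity), ← Real.rpow_pow_comm (by norm_num)]
    ring
  refine (lintegral_le_ofReal_tsum_of_measure_ball_le m hCv.le hvol (x := y)
    (r := fun k ↦ 4 * ρ k) (a := fun k ↦ ρ k ^ β) (fun k ↦ by positivity)
    (fun k ↦ (Real.rpow_pos_of_pos (hρ k) β).le)
    (by simpa only [hterm] using (summable_geometric_of_lt_one hq0 hq1).mul_left _)
    fun y' hy' ↦ ?_).trans_eq ?_
  · have hmem : dist y y' ≤ R := by
      by_contra h
      rw [dist_comm] at h
      simp [h] at hy'
    have hpos : 0 < dist y y' := dist_nonneg.lt_of_ne fun h ↦ by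
      simp [← h, Real.zero_rpow hβ.ne] at hy'
    obtain ⟨n, hlow, hupp⟩ := exists_dyadic_shell hpos hmem
    refine ⟨n, ?_, ?_⟩
    · rw [dist_comm]
      linarith [hρ n]
    · rw [Set.indicator_of_mem (by rwa [mem_closedBall, dist_comm])]
      exact ENNReal.ofReal_le_ofReal (Real.rpow_le_rpow_of_nonpos (hρ _) hlow.le hβ.le)
  · simp_rw [hterm]
    rw [tsum_mul_left, tsum_geometric_of_lt_one hq0 hq1]
    congr 1
    ring

end VolumeGrowth

theorem lintegral_lintegral_mul_le_of_le_add {M : Type*} [MeasurableSpace M] (m : Measure M)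
    {P Q : M → ℝ≥0∞} {K Kn : M → M → ℝ≥0∞} {a b B : ℝ≥0∞}
    (hP : Measurable P) (hQ : Measurable Q) (hKn : ∀ y, Measurable (Kn y))
    (hK : ∀ y y', K y y' ≤ a + Kn y y') (hQb : ∀ y', Q y' ≤ b)
    (hB : ∀ y, ∫⁻ y', Kn y y' ∂m ≤ B) :
    ∫⁻ y, ∫⁻ y', P y * K y y' * Q y' ∂m ∂m
      ≤ (∫⁻ y, P y ∂m) * (a * ∫⁻ y', Q y' ∂m + b * B) := by
  have hinner : ∀ y, ∫⁻ y', P y * K y y' * Q y' ∂m ≤ P y * (a * ∫⁻ y', Q y' ∂m + b * B) := by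
    intro y
    calc ∫⁻ y', P y * K y y' * Q y' ∂m ≤ ∫⁻ y', P y * (a * Q y' + b * Kn y y') ∂m := by
          refine lintegral_mono fun y' ↦ ?_
          rw [mul_assoc]
          gcongr P y * ?_
          calc K y y' * Q y' ≤ (a + Kn y y') * Q y' := by gcongr; exact hK y y'
            _ ≤ a * Q y' + b * Kn y y' := by
                rw [add_mul, mul_comm b]
                gcongr
                exact hQb y'
      _ = P y * (a * ∫⁻ y', Q y' ∂m + b * ∫⁻ y', Kn y y' ∂m) := by
          have hKny := hKn y
          rw [lintegral_const_mul _ (by fun_prop), lintegral_add_left (hQ.const_mul a),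
            lintegral_const_mul _ hQ, lintegral_const_mul _ hKny]
      _ ≤ P y * (a * ∫⁻ y', Q y' ∂m + b * B) := by gcongr; exact hB y
  calc ∫⁻ y, ∫⁻ y', P y * K y y' * Q y' ∂m ∂m
      ≤ ∫⁻ y, P y * (a * ∫⁻ y', Q y' ∂m + b * B) ∂m := lintegral_mono hinner
    _ = (∫⁻ y, P y ∂m) * (a * ∫⁻ y', Q y' ∂m + b * B) := lintegral_mul_const _ hP

theorem ofReal_dist_rpow_le_add_indicator {M : Type*} [PseudoMetricSpace M] {β R : ℝ}
    (hβ : β ≤ 0) (hR : 0 < R) (y y' : M) :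
    ENNReal.ofReal (dist y y' ^ β)
      ≤ ENNReal.ofReal (R ^ β)
        + (closedBall y R).indicator (fun y' ↦ ENNReal.ofReal (dist y y' ^ β)) y' := by
  by_cases h : y' ∈ closedBall y R
  · rw [Set.indicator_of_mem h]
    exact le_add_self
  · rw [Set.indicator_of_notMem h, add_zero]
    rw [mem_closedBall, not_le, dist_comm] at h
    exact ENNReal.ofReal_le_ofReal (Real.rpow_le_rpow_of_nonpos hR h.le hβ)

theorem gaussian_riesz_double_integral_two_factors_general
    (d : ℕ) {M : Type*} [MetricSpace M] [MeasurableSpace M] [BorelSpace M]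
    (m : Measure M)
    (C_v : ℝ) (hCv : 0 < C_v)
    (hvol : ∀ (x : M) (r : ℝ), 0 < r → m (Metric.ball x r) ≤ ENNReal.ofReal (C_v * r ^ d))
    (c : ℝ) (hc : 0 < c) (α : ℝ) (hα : 0 < α) (hαd : α < (d:ℝ) / 2) :
    ∃ C > 0, ∀ t > 0, ∀ x x' : M,
      ∫⁻ y, ∫⁻ y', ENNReal.ofReal (t ^ (-((d:ℝ) / 2)) *
          Real.exp (-(dist x y ^ 2) / (c * t)) * dist y y' ^ (2 * α - (d:ℝ)) *
          (t ^ (-((d:ℝ) / 2)) * Real.exp (-(dist x' y' ^ 2) / (c * t)))) ∂m ∂m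
        ≤ ENNReal.ofReal (C * (t ^ ((2 * α - (d:ℝ)) / 2) + 1)) := by
  set β : ℝ := 2 * α - d
  obtain ⟨A, hA, hgauss⟩ := exists_lintegral_rpow_mul_exp_neg_dist_sq_div_le m hCv hvol hc
  obtain ⟨B, hB, hnear⟩ := exists_lintegral_indicator_closedBall_dist_rpow_le m hCv hvol
    (β := β) (by linarith) (by linarith)
  refine ⟨A * (A + B), by positivity, fun t ht x x' ↦ ?_⟩
  have hu : 0 < √t := Real.sqrt_pos.2 ht
  set G : M → M → ℝ≥0∞ := fun z y ↦
    ENNReal.ofReal (t ^ (-((d : ℝ) / 2)) * Real.exp (-(dist z y ^ 2) / (c * t)))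
  have hG_le : ∀ z y, G z y ≤ ENNReal.ofReal (t ^ (-((d : ℝ) / 2))) := fun z y ↦
    ENNReal.ofReal_le_ofReal (mul_le_of_le_one_right (by positivity)
      (Real.exp_le_one_iff.2 (by rw [neg_div]; exact neg_nonpos.2 (by positivity))))
  have hcancel : t ^ (-((d : ℝ) / 2)) * (B * √t ^ (β + d)) = B * √t ^ β := by
    rw [← neg_div, Real.rpow_div_two_eq_sqrt _ ht.le, mul_left_comm, ← Real.rpow_add hu]
    congr 2
    ring
  calc _ = ∫⁻ y, ∫⁻ y', G x y * ENNReal.ofReal (dist y y' ^ β) * G x' y' ∂m ∂m := by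
        refine lintegral_congr fun y ↦ lintegral_congr fun y' ↦ ?_
        rw [ENNReal.ofReal_mul (by positivity), ENNReal.ofReal_mul (by positivity)]
    _ ≤ (∫⁻ y, G x y ∂m) * (ENNReal.ofReal (√t ^ β) * ∫⁻ y', G x' y' ∂m
          + ENNReal.ofReal (t ^ (-((d : ℝ) / 2))) * ENNReal.ofReal (B * √t ^ (β + d))) :=
        lintegral_lintegral_mul_le_of_le_add m (by fun_prop) (by fun_prop)
          (Kn := fun y ↦ (closedBall y √t).indicator fun y' ↦ ENNReal.ofReal (dist y y' ^ β))
          (fun y ↦ (by fun_prop : Measurable _).indicator measurableSet_closedBall)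
          (ofReal_dist_rpow_le_add_indicator (by linarith) hu) (hG_le x') (hnear √t hu)
    _ ≤ ENNReal.ofReal A * (ENNReal.ofReal (√t ^ β) * ENNReal.ofReal A
          + ENNReal.ofReal (t ^ (-((d : ℝ) / 2))) * ENNReal.ofReal (B * √t ^ (β + d))) := by
        gcongr <;> exact hgauss t ht _
    _ = ENNReal.ofReal (A * (A + B) * √t ^ β) := by
        rw [← ENNReal.ofReal_mul (p := t ^ _) (by positivity), hcancel,
          ← ENNReal.ofReal_mul (by positivity),
          ← ENNReal.ofReal_add (by positivity) (by positivity),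
          ← ENNReal.ofReal_mul (by positivity)]
        congr 1
        ring
    _ ≤ ENNReal.ofReal (A * (A + B) * (t ^ (β / 2) + 1)) := by
        rw [Real.rpow_div_two_eq_sqrt _ ht.le]
        exact ENNReal.ofReal_le_ofReal (by gcongr; linarith)

/-- Estimate (3.13) of the paper, metric-measure form: two Gaussian factors with
possibly different centers integrated against the Riesz-type kernel linking the
two integration variables. -/
theorem gaussian_riesz_double_integral_two_factors
    (d : ℕ) (hd : 1 ≤ d) {M : Type*} [MetricSpace M] [MeasurableSpace M] [BorelSpace M]
    (m : Measure M) (hfin : m Set.univ < ⊤)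
    (C_v : ℝ) (hCv : 0 < C_v)
    (hvol : ∀ (x : M) (r : ℝ), 0 < r → m (Metric.ball x r) ≤ ENNReal.ofReal (C_v * r ^ d))
    (c : ℝ) (hc : 0 < c) (α : ℝ) (hα : 0 < α) (hαd : α < (d:ℝ) / 2) :
    ∃ C > 0, ∀ t > 0, ∀ x x' : M,
      ∫⁻ y, ∫⁻ y', ENNReal.ofReal (t ^ (-((d:ℝ) / 2)) *
          Real.exp (-(dist x y ^ 2) / (c * t)) * dist y y' ^ (2 * α - (d:ℝ)) *
          (t ^ (-((d:ℝ) / 2)) * Real.exp (-(dist x' y' ^ 2) / (c * t)))) ∂m ∂m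
        ≤ ENNReal.ofReal (C * (t ^ ((2 * α - (d:ℝ)) / 2) + 1)) :=
  gaussian_riesz_double_integral_two_factors_general d m C_v hCv hvol c hc α hα hαd
end

section
/- Fix γ ∈ (0,1), C₀ > 0, and λ > 0. Let (k_n)_{n≥0} be measurable functions k_n : (0,∞) → [0,∞) with k_n(s) ≤ C₀·(1 + s^(−γ)) for all n ≥ 0 and s > 0. Define h₀(t) := 1 and h_{n+1}(t) := ∫_0^t h_n(t−s)·k_n(s) ds. Then there exist constants C > 0 and θ > 0 (depending only on γ, C₀, λ) such that for all t ≥ 0, the series H_λ(t) := Σ_{n=0}^∞ λ^(2n)·h_n(t) converges and satisfies H_λ(t) ≤ C·e^(θt). -/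
open MeasureTheory ENNReal

/-- Lemma 3.12 of the paper: the series `H_λ(t) = Σ λ^(2n)·h_n(t)` built from the
iteration scheme converges and grows at most exponentially in time. -/
theorem iteration_scheme_exponential_bound
    (γ C₀ lam : ℝ) (hγ : γ ∈ Set.Ioo (0:ℝ) 1) (hC₀ : 0 < C₀) (hlam : 0 < lam)
    (k : ℕ → ℝ → ℝ≥0∞) (hk_meas : ∀ n, Measurable (k n))
    (hk : ∀ n, ∀ s > (0:ℝ), k n s ≤ ENNReal.ofReal (C₀ * (1 + s ^ (-γ))))
    (h : ℕ → ℝ → ℝ≥0∞)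
    (h0 : ∀ t, h 0 t = 1)
    (hrec : ∀ n t, h (n + 1) t = ∫⁻ s in Set.Ioc (0:ℝ) t, h n (t - s) * k n s) :
    ∃ C > 0, ∃ θ > 0, ∀ t ≥ (0:ℝ),
      (∑' n : ℕ, ENNReal.ofReal lam ^ (2 * n) * h n t)
        ≤ ENNReal.ofReal (C * Real.exp (θ * t)) := by
  obtain ⟨hγ0, hγ1⟩ := hγ
  have h1γ : (0:ℝ) < 1 - γ := by linarith
  set ε : ℝ := 1 / (2 * lam ^ 2) with hεdef
  have hεpos : 0 < ε := by positivity
  set K : ℝ := 1 + 1 / (1 - γ) with hKdef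
  have hKpos : 0 < K := by positivity
  have hbase : (0:ℝ) < ε / (2 * C₀ * K) := by positivity
  set δ : ℝ := min 1 ((ε / (2 * C₀ * K)) ^ ((1:ℝ) / (1 - γ))) with hδdef
  have hδpos : 0 < δ := lt_min one_pos (Real.rpow_pos_of_pos hbase _)
  have hδ1 : δ ≤ 1 := min_le_left _ _
  have hδγ : δ ^ (1 - γ) ≤ ε / (2 * C₀ * K) := by
    have h2 : δ ^ (1 - γ) ≤ ((ε / (2 * C₀ * K)) ^ ((1:ℝ) / (1 - γ))) ^ (1 - γ) :=
      Real.rpow_le_rpow hδpos.le (min_le_right _ _) h1γ.le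
    rwa [← Real.rpow_mul hbase.le, one_div, inv_mul_cancel₀ h1γ.ne', Real.rpow_one] at h2
  have hδbound : C₀ * (δ + δ ^ (1 - γ) / (1 - γ)) ≤ ε / 2 := by
    have hδδ : δ ≤ δ ^ (1 - γ) := by
      calc δ = δ ^ (1:ℝ) := (Real.rpow_one δ).symm
        _ ≤ δ ^ (1 - γ) := Real.rpow_le_rpow_of_exponent_ge hδpos hδ1 (by linarith)
    have hsum : δ + δ ^ (1 - γ) / (1 - γ) ≤ δ ^ (1 - γ) * K := by
      rw [hKdef, mul_add, mul_one, mul_one_div]; linarith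
    calc C₀ * (δ + δ ^ (1 - γ) / (1 - γ)) ≤ C₀ * (δ ^ (1 - γ) * K) :=
          mul_le_mul_of_nonneg_left hsum hC₀.le
      _ ≤ C₀ * ((ε / (2 * C₀ * K)) * K) := by
          have := mul_le_mul_of_nonneg_right hδγ hKpos.le
          exact mul_le_mul_of_nonneg_left this hC₀.le
      _ = ε / 2 := by field_simp
  have hδnegpos : 0 < δ ^ (-γ) := Real.rpow_pos_of_pos hδpos _
  set M : ℝ := 2 * C₀ * (1 + δ ^ (-γ)) / ε with hMdef
  have hMpos : 0 < M := by positivity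
  set θ : ℝ := max 1 (Real.log M / δ) with hθdef
  have hθ1 : (1:ℝ) ≤ θ := le_max_left _ _
  have hθpos : (0:ℝ) < θ := lt_of_lt_of_le one_pos hθ1
  have hexpθδ : Real.exp (-(θ * δ)) ≤ ε / (2 * C₀ * (1 + δ ^ (-γ))) := by
    have hlM : Real.log M ≤ θ * δ := by
      have h1 : Real.log M / δ ≤ θ := le_max_right _ _
      calc Real.log M = (Real.log M / δ) * δ := by field_simp
        _ ≤ θ * δ := mul_le_mul_of_nonneg_right h1 hδpos.le
    calc Real.exp (-(θ * δ)) ≤ Real.exp (-(Real.log M)) := Real.exp_le_exp.mpr (by linarith)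
      _ = M⁻¹ := by rw [Real.exp_neg, Real.exp_log hMpos]
      _ = ε / (2 * C₀ * (1 + δ ^ (-γ))) := by rw [hMdef, inv_div]
  -- The key integral bound
  have Jbound : (∫⁻ s in Set.Ioi (0:ℝ),
      ENNReal.ofReal (Real.exp (-(θ * s)) * (C₀ * (1 + s ^ (-γ))))) ≤ ENNReal.ofReal ε := by
    rw [← Set.Ioc_union_Ioi_eq_Ioi hδpos.le,
      lintegral_union measurableSet_Ioi Set.Ioc_disjoint_Ioi_same]
    have I1 : (∫⁻ s in Set.Ioc (0:ℝ) δ,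
        ENNReal.ofReal (Real.exp (-(θ * s)) * (C₀ * (1 + s ^ (-γ))))) ≤ ENNReal.ofReal (ε / 2) := by
      have step1 : (∫⁻ s in Set.Ioc (0:ℝ) δ,
          ENNReal.ofReal (Real.exp (-(θ * s)) * (C₀ * (1 + s ^ (-γ)))))
          ≤ ∫⁻ s in Set.Ioc (0:ℝ) δ,
            (ENNReal.ofReal C₀ + ENNReal.ofReal (C₀ * s ^ (-γ))) := by
        refine lintegral_mono_ae (((ae_restrict_mem measurableSet_Ioc)).mono fun s hs => ?_)
        have hsnn : (0:ℝ) ≤ s ^ (-γ) := Real.rpow_nonneg hs.1.le _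
        have h1 : Real.exp (-(θ * s)) ≤ 1 := by
          rw [Real.exp_le_one_iff]
          nlinarith [hs.1, hθpos]
        calc ENNReal.ofReal (Real.exp (-(θ * s)) * (C₀ * (1 + s ^ (-γ))))
            ≤ ENNReal.ofReal (1 * (C₀ * (1 + s ^ (-γ)))) :=
              ENNReal.ofReal_le_ofReal
                (mul_le_mul_of_nonneg_right h1 (by positivity))
          _ = ENNReal.ofReal (C₀ + C₀ * s ^ (-γ)) := by ring_nf
          _ ≤ ENNReal.ofReal C₀ + ENNReal.ofReal (C₀ * s ^ (-γ)) := ENNReal.ofReal_add_le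
      have hInt : IntegrableOn (fun s : ℝ => s ^ (-γ)) (Set.Ioc 0 δ) :=
        (intervalIntegral.intervalIntegrable_rpow' (by linarith : (-1:ℝ) < -γ)).1
      have hval : (∫ s in Set.Ioc (0:ℝ) δ, s ^ (-γ)) = δ ^ (1 - γ) / (1 - γ) := by
        rw [← intervalIntegral.integral_of_le hδpos.le,
          integral_rpow (Or.inl (by linarith : (-1:ℝ) < -γ))]
        rw [Real.zero_rpow (by intro hh; apply h1γ.ne'; linarith : -γ + 1 ≠ 0)]
        ring_nf
      have hlin : (∫⁻ s in Set.Ioc (0:ℝ) δ, ENNReal.ofReal (s ^ (-γ)))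
          = ENNReal.ofReal (δ ^ (1 - γ) / (1 - γ)) := by
        rw [← ofReal_integral_eq_lintegral_ofReal hInt
          (((ae_restrict_mem measurableSet_Ioc)).mono fun s hs => Real.rpow_nonneg hs.1.le _),
          hval]
      calc (∫⁻ s in Set.Ioc (0:ℝ) δ,
            ENNReal.ofReal (Real.exp (-(θ * s)) * (C₀ * (1 + s ^ (-γ)))))
          ≤ ∫⁻ s in Set.Ioc (0:ℝ) δ,
            (ENNReal.ofReal C₀ + ENNReal.ofReal (C₀ * s ^ (-γ))) := step1
        _ = ENNReal.ofReal C₀ * volume (Set.Ioc (0:ℝ) δ)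
            + ∫⁻ s in Set.Ioc (0:ℝ) δ, ENNReal.ofReal (C₀ * s ^ (-γ)) := by
            rw [lintegral_add_left measurable_const, setLIntegral_const]
        _ = ENNReal.ofReal C₀ * ENNReal.ofReal δ
            + ENNReal.ofReal C₀ * ENNReal.ofReal (δ ^ (1 - γ) / (1 - γ)) := by
            rw [Real.volume_Ioc, sub_zero]
            congr 1
            have : ∀ s : ℝ, ENNReal.ofReal (C₀ * s ^ (-γ))
                = ENNReal.ofReal C₀ * ENNReal.ofReal (s ^ (-γ)) := fun s =>
              ENNReal.ofReal_mul hC₀.le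
            simp_rw [this]
            rw [lintegral_const_mul' _ _ ENNReal.ofReal_ne_top, hlin]
        _ = ENNReal.ofReal (C₀ * δ + C₀ * (δ ^ (1 - γ) / (1 - γ))) := by
            rw [← ENNReal.ofReal_mul hC₀.le, ← ENNReal.ofReal_mul hC₀.le,
              ← ENNReal.ofReal_add (by positivity) (by positivity)]
        _ ≤ ENNReal.ofReal (ε / 2) := by
            apply ENNReal.ofReal_le_ofReal
            calc C₀ * δ + C₀ * (δ ^ (1 - γ) / (1 - γ))
                = C₀ * (δ + δ ^ (1 - γ) / (1 - γ)) := by ring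
              _ ≤ ε / 2 := hδbound
    have I2 : (∫⁻ s in Set.Ioi δ,
        ENNReal.ofReal (Real.exp (-(θ * s)) * (C₀ * (1 + s ^ (-γ))))) ≤ ENNReal.ofReal (ε / 2) := by
      set c : ℝ := C₀ * (1 + δ ^ (-γ)) * Real.exp (-((θ - 1) * δ)) with hcdef
      have hcpos : 0 < c := by positivity
      have step1 : (∫⁻ s in Set.Ioi δ,
          ENNReal.ofReal (Real.exp (-(θ * s)) * (C₀ * (1 + s ^ (-γ)))))
          ≤ ∫⁻ s in Set.Ioi δ, ENNReal.ofReal (c * Real.exp (-s)) := by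
        refine lintegral_mono_ae (((ae_restrict_mem measurableSet_Ioi)).mono fun s hs => ?_)
        have hδs : δ < s := hs
        apply ENNReal.ofReal_le_ofReal
        have h1 : s ^ (-γ) ≤ δ ^ (-γ) :=
          Real.rpow_le_rpow_of_nonpos hδpos hδs.le (neg_nonpos.mpr hγ0.le)
        have h2 : Real.exp (-(θ * s)) ≤ Real.exp (-((θ - 1) * δ)) * Real.exp (-s) := by
          rw [← Real.exp_add]
          apply Real.exp_le_exp.mpr
          nlinarith [hδs, hθ1]
        have hsnn : (0:ℝ) ≤ s ^ (-γ) := Real.rpow_nonneg (hδpos.trans hδs).le _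
        calc Real.exp (-(θ * s)) * (C₀ * (1 + s ^ (-γ)))
            ≤ (Real.exp (-((θ - 1) * δ)) * Real.exp (-s)) * (C₀ * (1 + δ ^ (-γ))) := by
              apply mul_le_mul h2 (by nlinarith) (by positivity) (by positivity)
          _ = c * Real.exp (-s) := by rw [hcdef]; ring
      have hIntExp : IntegrableOn (fun s : ℝ => Real.exp (-s)) (Set.Ioi δ) := by
        simpa using exp_neg_integrableOn_Ioi δ one_pos
      have step2 : (∫⁻ s in Set.Ioi δ, ENNReal.ofReal (c * Real.exp (-s)))
          = ENNReal.ofReal (c * Real.exp (-δ)) := by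
        have : ∀ s : ℝ, ENNReal.ofReal (c * Real.exp (-s))
            = ENNReal.ofReal c * ENNReal.ofReal (Real.exp (-s)) := fun s =>
          ENNReal.ofReal_mul hcpos.le
        simp_rw [this]
        rw [lintegral_const_mul' _ _ ENNReal.ofReal_ne_top,
          ← ofReal_integral_eq_lintegral_ofReal hIntExp
            (Filter.Eventually.of_forall fun s => (Real.exp_pos _).le),
          integral_exp_neg_Ioi, ← ENNReal.ofReal_mul hcpos.le]
      have final : c * Real.exp (-δ) ≤ ε / 2 := by
        have hce : c * Real.exp (-δ) = C₀ * (1 + δ ^ (-γ)) * Real.exp (-(θ * δ)) := by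
          rw [hcdef, mul_assoc, ← Real.exp_add]
          ring_nf
        rw [hce]
        calc C₀ * (1 + δ ^ (-γ)) * Real.exp (-(θ * δ))
            ≤ C₀ * (1 + δ ^ (-γ)) * (ε / (2 * C₀ * (1 + δ ^ (-γ)))) :=
              mul_le_mul_of_nonneg_left hexpθδ (by positivity)
          _ = ε / 2 := by field_simp
      exact step1.trans (by rw [step2]; exact ENNReal.ofReal_le_ofReal final)
    calc _ ≤ ENNReal.ofReal (ε / 2) + ENNReal.ofReal (ε / 2) := add_le_add I1 I2
      _ = ENNReal.ofReal ε := by rw [← ENNReal.ofReal_add (by positivity) (by positivity)]; ring_nf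
  -- The main induction
  have hmain : ∀ n, ∀ t, 0 ≤ t → h n t ≤ ENNReal.ofReal (ε ^ n * Real.exp (θ * t)) := by
    intro n
    induction n with
    | zero =>
      intro t ht
      rw [h0, pow_zero, one_mul]
      exact ENNReal.one_le_ofReal.mpr (Real.one_le_exp (by positivity))
    | succ n ih =>
      intro t ht
      rw [hrec]
      calc (∫⁻ s in Set.Ioc (0:ℝ) t, h n (t - s) * k n s)
          ≤ ∫⁻ s in Set.Ioc (0:ℝ) t, ENNReal.ofReal (ε ^ n * Real.exp (θ * t)) *
              ENNReal.ofReal (Real.exp (-(θ * s)) * (C₀ * (1 + s ^ (-γ)))) := by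
            refine lintegral_mono_ae (((ae_restrict_mem measurableSet_Ioc)).mono fun s hs => ?_)
            have h1 := ih (t - s) (by linarith [hs.2])
            have h2 := hk n s hs.1
            calc h n (t - s) * k n s
                ≤ ENNReal.ofReal (ε ^ n * Real.exp (θ * (t - s))) *
                  ENNReal.ofReal (C₀ * (1 + s ^ (-γ))) := mul_le_mul' h1 h2
              _ = ENNReal.ofReal (ε ^ n * Real.exp (θ * t)) *
                  ENNReal.ofReal (Real.exp (-(θ * s)) * (C₀ * (1 + s ^ (-γ)))) := by
                  have hsnn : (0:ℝ) ≤ s ^ (-γ) := Real.rpow_nonneg hs.1.le _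
                  rw [← ENNReal.ofReal_mul (by positivity), ← ENNReal.ofReal_mul (by positivity)]
                  congr 1
                  rw [show θ * (t - s) = θ * t + -(θ * s) by ring, Real.exp_add]
                  ring
        _ = ENNReal.ofReal (ε ^ n * Real.exp (θ * t)) *
            ∫⁻ s in Set.Ioc (0:ℝ) t,
              ENNReal.ofReal (Real.exp (-(θ * s)) * (C₀ * (1 + s ^ (-γ)))) :=
            lintegral_const_mul' _ _ ENNReal.ofReal_ne_top
        _ ≤ ENNReal.ofReal (ε ^ n * Real.exp (θ * t)) * ENNReal.ofReal ε := by
            refine mul_le_mul_right ?_ _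
            exact le_trans (lintegral_mono_set Set.Ioc_subset_Ioi_self) Jbound
        _ = ENNReal.ofReal (ε ^ (n + 1) * Real.exp (θ * t)) := by
            rw [← ENNReal.ofReal_mul (by positivity)]
            congr 1
            ring
  refine ⟨2, by norm_num, θ, hθpos, fun t ht => ?_⟩
  have hhalf : lam ^ 2 * ε = 1 / 2 := by rw [hεdef]; field_simp
  calc (∑' n : ℕ, ENNReal.ofReal lam ^ (2 * n) * h n t)
      ≤ ∑' n : ℕ, ENNReal.ofReal lam ^ (2 * n) *
          ENNReal.ofReal (ε ^ n * Real.exp (θ * t)) :=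
        ENNReal.tsum_le_tsum fun n => mul_le_mul_right (hmain n t ht) _
    _ = ∑' n : ℕ, ENNReal.ofReal (1 / 2 : ℝ) ^ n * ENNReal.ofReal (Real.exp (θ * t)) := by
        congr 1
        funext n
        rw [← ENNReal.ofReal_pow hlam.le, ← ENNReal.ofReal_pow (by norm_num : (0:ℝ) ≤ 1 / 2),
          ← ENNReal.ofReal_mul (by positivity), ← ENNReal.ofReal_mul (by positivity)]
        congr 1
        calc lam ^ (2 * n) * (ε ^ n * Real.exp (θ * t))
            = (lam ^ 2) ^ n * ε ^ n * Real.exp (θ * t) := by rw [pow_mul]; ring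
          _ = (lam ^ 2 * ε) ^ n * Real.exp (θ * t) := by rw [← mul_pow]
          _ = (1 / 2 : ℝ) ^ n * Real.exp (θ * t) := by rw [hhalf]
    _ = (∑' n : ℕ, ENNReal.ofReal (1 / 2 : ℝ) ^ n) * ENNReal.ofReal (Real.exp (θ * t)) :=
        ENNReal.tsum_mul_right
    _ = ENNReal.ofReal 2 * ENNReal.ofReal (Real.exp (θ * t)) := by
        rw [ENNReal.tsum_geometric]
        congr 1
        have h12 : ENNReal.ofReal (1 / 2 : ℝ) = 2⁻¹ := by
          rw [one_div, ENNReal.ofReal_inv_of_pos two_pos, ENNReal.ofReal_ofNat]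
        rw [h12, ENNReal.one_sub_inv_two, inv_inv, ENNReal.ofReal_ofNat]
    _ = ENNReal.ofReal (2 * Real.exp (θ * t)) := (ENNReal.ofReal_mul (by norm_num)).symm
end
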